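/- arXiv:2412.07745 — 6 statements merged into one kernel-verified Lean document; each statement's English description precedes it below -/
import Mathlib

section
/- Let K : (0,∞)×(0,∞) → ℝ be a continuous symmetric coagulation kernel satisfying the power-law bounds with constants 0 < c₁ ≤ c₂ and exponents γ, λ such that −λ < 1 and γ+λ < 1. Let a > 0, 𝒦 ≥ max(2, 2a), and let ζ : (0,∞) → [0,1] be continuous with ζ = 1 on [a,𝒦] and ζ = 0 outside [a/2, 2𝒦]. Let f₀ and η be finite positive measures with finite first moments supported in [a, 2𝒦], and let (f_t)_{t∈[0,T]} be a family of finite positive measures supported in [a, 2𝒦] such that for every φ ∈ C¹([0,T], C_c((0,∞))) and t ∈ [0,T]: ∫ φ(t,x) f_t(dx) − ∫ φ(0,x) f₀(dx) = ∫_0^t ∫ ∂_sφ(s,x) f_s(dx) ds + (1/2)∫_0^t ∬ (ζ(x+y)φ(s,x+y) − φ(s,x) − φ(s,y)) K(x,y) f_s(dx) f_s(dy) ds + ∫_0^t ∫ φ(s,x) η(dx) ds. Then for each p ∈ {0, γ+λ, −λ}: sup_{t∈[0,T]} M_p(f_t) ≤ M_p(f₀) + T·M_p(η). -/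
open MeasureTheory Set ENNReal Filter

/-- The power-law comparison kernel `x^(γ+λ) y^(-λ) + x^(-λ) y^(γ+λ)`. -/
noncomputable def powKernel (γ lam x y : ℝ) : ℝ :=
  x ^ (γ + lam) * y ^ (-lam) + x ^ (-lam) * y ^ (γ + lam)

/-- `K` is a continuous symmetric coagulation kernel satisfying the power-law
bounds with constants `0 < c₁ ≤ c₂` and exponents `γ, lam`. -/
def KernelHyp (K : ℝ → ℝ → ℝ) (c₁ c₂ γ lam : ℝ) : Prop :=
  0 < c₁ ∧ c₁ ≤ c₂ ∧
  ContinuousOn (fun p : ℝ × ℝ => K p.1 p.2) (Ioi 0 ×ˢ Ioi 0) ∧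
  (∀ x y, 0 < x → 0 < y → K x y = K y x) ∧
  (∀ x y, 0 < x → 0 < y →
    c₁ * powKernel γ lam x y ≤ K x y ∧ K x y ≤ c₂ * powKernel γ lam x y)

/-- The `p`-th moment `M_p(μ) = ∫_{(0,∞)} x^p μ(dx)`. -/
noncomputable def moment (μ : Measure ℝ) (p : ℝ) : ℝ≥0∞ :=
  ∫⁻ x in Ioi (0:ℝ), ENNReal.ofReal (x ^ p) ∂μ

/-- `φ` is a test function in `C¹([0,T], C_c((0,∞)))`, with (joint) time
derivative `ψ`: both are jointly continuous, `ψ` is the time derivative of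
`φ`, and `φ` is supported, in the size variable, in a compact subset
`[a,b] ⊂ (0,∞)`. -/
def TimeTestFun (φ ψ : ℝ → ℝ → ℝ) : Prop :=
  Continuous (fun q : ℝ × ℝ => φ q.1 q.2) ∧
  Continuous (fun q : ℝ × ℝ => ψ q.1 q.2) ∧
  (∀ s x, HasDerivAt (fun u => φ u x) (ψ s x) s) ∧
  (∃ a b : ℝ, 0 < a ∧ ∀ s x, x ∉ Icc a b → φ s x = 0)

/-- Cut-off version of `x ^ p`: equals `x ^ p` on `[a, b]`, vanishes outside
`[a/2, 2b]`, nonnegative and continuous (for `0 < a ≤ b`). -/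
noncomputable def gfun (a b p x : ℝ) : ℝ :=
  max 0 (min 1 (min ((x - a / 2) / (a / 2)) ((2 * b - x) / b))) * (min (max x a) b) ^ p

lemma gfun_nonneg (a b p x : ℝ) (ha : 0 < a) (hab : a ≤ b) : 0 ≤ gfun a b p x := by
  apply mul_nonneg (le_max_left _ _)
  exact Real.rpow_nonneg (le_min (ha.le.trans (le_max_right _ _)) (ha.le.trans hab)) _

lemma gfun_eq (a b p x : ℝ) (ha : 0 < a) (hx : x ∈ Icc a b) : gfun a b p x = x ^ p := by
  obtain ⟨h1, h2⟩ := hx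
  have ha2 : 0 < a / 2 := by linarith
  have hb : 0 < b := lt_of_lt_of_le ha (h1.trans h2)
  have e1 : (1:ℝ) ≤ (x - a / 2) / (a / 2) := by
    rw [le_div_iff₀ ha2]; linarith
  have e2 : (1:ℝ) ≤ (2 * b - x) / b := by
    rw [le_div_iff₀ hb]; linarith
  rw [gfun, min_eq_left (le_min e1 e2), max_eq_right zero_le_one,
    max_eq_left h1, min_eq_left h2, one_mul]

lemma gfun_zero (a b p x : ℝ) (ha : 0 < a) (hb : 0 < b) (hx : x ∉ Icc (a / 2) (2 * b)) :
    gfun a b p x = 0 := by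
  have ha2 : 0 < a / 2 := by linarith
  rw [mem_Icc, not_and_or, not_le, not_le] at hx
  rcases hx with hx | hx
  · have : (x - a / 2) / (a / 2) ≤ 0 := div_nonpos_of_nonpos_of_nonneg (by linarith) ha2.le
    rw [gfun, max_eq_left, zero_mul]
    exact (min_le_right _ _).trans ((min_le_left _ _).trans this)
  · have : (2 * b - x) / b ≤ 0 := div_nonpos_of_nonpos_of_nonneg (by linarith) hb.le
    rw [gfun, max_eq_left, zero_mul]
    exact (min_le_right _ _).trans ((min_le_right _ _).trans this)

lemma gfun_continuous (a b p : ℝ) (ha : 0 < a) (hab : a ≤ b) : Continuous (gfun a b p) := by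
  apply Continuous.mul
  · exact continuous_const.max ((continuous_const.min
      (((continuous_id.sub continuous_const).div_const _).min
        ((continuous_const.sub continuous_id).div_const _))))
  · apply Continuous.rpow_const ((continuous_id.max continuous_const).min continuous_const)
    intro x
    left
    have : a ≤ min (max x a) b := le_min (le_max_right _ _) hab
    exact ne_of_gt (lt_of_lt_of_le ha this)

lemma rpow_subadd {x y p : ℝ} (hx : 0 < x) (hy : 0 < y) (hp : p ≤ 1) :
    (x + y) ^ p ≤ x ^ p + y ^ p := by
  rcases le_or_gt 0 p with hp0 | hp0
  · have h := NNReal.rpow_add_le_add_rpow x.toNNReal y.toNNReal hp0 hp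
    have := NNReal.coe_le_coe.2 h
    push_cast [NNReal.coe_rpow, Real.coe_toNNReal _ hx.le, Real.coe_toNNReal _ hy.le,
      Real.coe_toNNReal _ (by positivity : (0:ℝ) ≤ x + y)] at this
    exact this
  · have h1 : (x + y) ^ p ≤ x ^ p :=
      Real.rpow_le_rpow_of_nonpos hx (by linarith) hp0.le
    have h2 : 0 ≤ y ^ p := Real.rpow_nonneg hy.le _
    linarith

lemma compl_Icc_eq (a b : ℝ) : (Icc a b)ᶜ = Iio a ∪ Ioi b := by
  ext x
  simp only [mem_compl_iff, mem_Icc, mem_union, mem_Iio, mem_Ioi, not_and_or, not_le]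

lemma moment_eq_integral (a b p : ℝ) (ha : 0 < a) (hab : a ≤ b)
    (μ : Measure ℝ) [IsFiniteMeasure μ] (h1 : μ (Iio a) = 0) (h2 : μ (Ioi b) = 0) :
    moment μ p = ENNReal.ofReal (∫ x in Ioi (0:ℝ), gfun a b p x ∂μ) := by
  have hb : 0 < b := lt_of_lt_of_le ha hab
  have hnull : μ ((Icc a b)ᶜ) = 0 := by
    rw [compl_Icc_eq]
    exact measure_union_null h1 h2
  have hae : ∀ᵐ x ∂μ, x ∈ Icc a b := by
    rw [ae_iff]
    exact hnull
  have hae' : ∀ᵐ x ∂(μ.restrict (Ioi 0)), x ∈ Icc a b := ae_restrict_of_ae hae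
  have hint : Integrable (gfun a b p) (μ.restrict (Ioi 0)) := by
    apply Continuous.integrable_of_hasCompactSupport (gfun_continuous a b p ha hab)
    exact HasCompactSupport.intro isCompact_Icc fun x hx => gfun_zero a b p x ha hb hx
  rw [moment]
  rw [lintegral_congr_ae (g := fun x => ENNReal.ofReal (gfun a b p x))
    (hae'.mono fun x hx => by simp only []; rw [gfun_eq a b p x ha hx])]
  rw [← ofReal_integral_eq_lintegral_ofReal hint
    (Eventually.of_forall fun x => gfun_nonneg a b p x ha hab)]

/-- Lemma 3.5 of the paper: moment bounds for solutions of
the truncated coagulation equation with cutoff `ζ` and source `η`: for each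
`p ∈ {0, γ+λ, -λ}`, `sup_{t∈[0,T]} M_p(f_t) ≤ M_p(f₀) + T·M_p(η)`. -/
theorem truncated_equation_moment_bounds
    (K : ℝ → ℝ → ℝ) (c₁ c₂ γ lam : ℝ)
    (hK : KernelHyp K c₁ c₂ γ lam)
    (hlam : -lam < 1) (hglam : γ + lam < 1)
    (a 𝒦 : ℝ) (ha : 0 < a) (h𝒦 : max 2 (2 * a) ≤ 𝒦)
    (ζ : ℝ → ℝ) (hζc : Continuous ζ) (hζ01 : ∀ x, ζ x ∈ Icc (0:ℝ) 1)
    (hζ1 : ∀ x ∈ Icc a 𝒦, ζ x = 1)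
    (hζ0 : ∀ x, x ∉ Icc (a / 2) (2 * 𝒦) → ζ x = 0)
    (f₀ : Measure ℝ) [IsFiniteMeasure f₀] (hf₀m : moment f₀ 1 < ∞)
    (hf₀supp : f₀ (Iio a) = 0 ∧ f₀ (Ioi (2 * 𝒦)) = 0)
    (η : Measure ℝ) [IsFiniteMeasure η] (hηm : moment η 1 < ∞)
    (hηsupp : η (Iio a) = 0 ∧ η (Ioi (2 * 𝒦)) = 0)
    (T : ℝ) (hT : 0 < T)
    (f : ℝ → Measure ℝ)
    (hsupp : ∀ t ∈ Icc (0:ℝ) T, (f t) (Iio a) = 0 ∧ (f t) (Ioi (2 * 𝒦)) = 0)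
    (hfin : ∀ t ∈ Icc (0:ℝ) T, IsFiniteMeasure (f t))
    (heq : ∀ φ ψ : ℝ → ℝ → ℝ, TimeTestFun φ ψ → ∀ t ∈ Icc (0:ℝ) T,
      (∫ x in Ioi (0:ℝ), φ t x ∂(f t)) - (∫ x in Ioi (0:ℝ), φ 0 x ∂f₀)
        = (∫ s in (0:ℝ)..t, ∫ x in Ioi (0:ℝ), ψ s x ∂(f s))
          + (1 / 2) * (∫ s in (0:ℝ)..t,
              ∫ p in (Ioi (0:ℝ)) ×ˢ (Ioi (0:ℝ)),
                (ζ (p.1 + p.2) * φ s (p.1 + p.2) - φ s p.1 - φ s p.2)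
                  * K p.1 p.2 ∂((f s).prod (f s)))
          + ∫ s in (0:ℝ)..t, ∫ x in Ioi (0:ℝ), φ s x ∂η) :
    ∀ p : ℝ, (p = 0 ∨ p = γ + lam ∨ p = -lam) →
      ∀ t ∈ Icc (0:ℝ) T,
        moment (f t) p ≤ moment f₀ p + ENNReal.ofReal T * moment η p := by
  intro p hp t ht
  obtain ⟨hc₁, hc₁₂, hKcont, hKsymm, hKbd⟩ := hK
  have h2K : (2:ℝ) ≤ 𝒦 := le_trans (le_max_left _ _) h𝒦
  have h2aK : 2 * a ≤ 𝒦 := le_trans (le_max_right _ _) h𝒦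
  set b := 2 * 𝒦 with hbdef
  have hb : 0 < b := by simp only [hbdef]; nlinarith
  have hab : a ≤ b := by simp only [hbdef]; nlinarith
  have hp1 : p ≤ 1 := by rcases hp with h | h | h <;> rw [h] <;> linarith
  set g := gfun a b p with hg
  have hgz : ∀ x, x ∉ Icc (a / 2) (2 * b) → g x = 0 :=
    fun x hx => gfun_zero a b p x ha hb hx
  have htest : TimeTestFun (fun _ x => g x) (fun _ _ => 0) :=
    ⟨(gfun_continuous a b p ha hab).comp continuous_snd, continuous_const,
      fun s x => hasDerivAt_const _ _,
      ⟨a / 2, 2 * b, by linarith, fun s x hx => hgz x hx⟩⟩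
  have heqt := heq (fun _ x => g x) (fun _ _ => 0) htest t ht
  simp only [integral_zero, intervalIntegral.integral_zero, intervalIntegral.integral_const,
    zero_add, sub_zero, smul_eq_mul] at heqt
  -- nonpositivity of the coagulation term
  have hD : ∀ s ∈ Icc (0:ℝ) t,
      (∫ q in (Ioi (0:ℝ)) ×ˢ (Ioi (0:ℝ)),
        (ζ (q.1 + q.2) * g (q.1 + q.2) - g q.1 - g q.2) * K q.1 q.2
        ∂((f s).prod (f s))) ≤ 0 := by
    intro s hs
    have hsT : s ∈ Icc (0:ℝ) T := ⟨hs.1, hs.2.trans ht.2⟩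
    haveI := hfin s hsT
    obtain ⟨hn1, hn2⟩ := hsupp s hsT
    have hnull : (f s) ((Icc a b)ᶜ) = 0 := by
      rw [compl_Icc_eq]; exact measure_union_null hn1 hn2
    have hprodnull : ((f s).prod (f s)) ((Icc a b ×ˢ Icc a b)ᶜ) = 0 := by
      have hsub : (Icc a b ×ˢ Icc a b)ᶜ ⊆
          ((Icc a b)ᶜ ×ˢ (univ : Set ℝ)) ∪ ((univ : Set ℝ) ×ˢ (Icc a b)ᶜ) := by
        rintro ⟨x, y⟩ hq
        simp only [mem_compl_iff, mem_prod, mem_union, mem_univ, and_true, true_and,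
          not_and_or] at hq ⊢
        exact hq
      refine measure_mono_null hsub (measure_union_null ?_ ?_)
      · rw [Measure.prod_prod, hnull, zero_mul]
      · rw [Measure.prod_prod, hnull, mul_zero]
    have hmem : ∀ᵐ q ∂(((f s).prod (f s)).restrict ((Ioi (0:ℝ)) ×ˢ (Ioi (0:ℝ)))),
        q ∈ Icc a b ×ˢ Icc a b :=
      ae_restrict_of_ae (by rw [ae_iff]; exact hprodnull)
    apply integral_nonpos_of_ae
    filter_upwards [hmem] with q hq
    obtain ⟨hqx, hqy⟩ := mem_prod.1 hq
    have hx0 : 0 < q.1 := lt_of_lt_of_le ha hqx.1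
    have hy0 : 0 < q.2 := lt_of_lt_of_le ha hqy.1
    have hKnn : 0 ≤ K q.1 q.2 := by
      refine le_trans ?_ ((hKbd q.1 q.2 hx0 hy0).1)
      have : 0 ≤ powKernel γ lam q.1 q.2 := by
        unfold powKernel; positivity
      exact mul_nonneg hc₁.le this
    have hgx : g q.1 = q.1 ^ p := gfun_eq a b p q.1 ha hqx
    have hgy : g q.2 = q.2 ^ p := gfun_eq a b p q.2 ha hqy
    have hbr : ζ (q.1 + q.2) * g (q.1 + q.2) ≤ q.1 ^ p + q.2 ^ p := by
      by_cases hxy : q.1 + q.2 ≤ b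
      · have hgxy : g (q.1 + q.2) = (q.1 + q.2) ^ p :=
          gfun_eq a b p _ ha ⟨by linarith [hqx.1], hxy⟩
        have h1 : ζ (q.1 + q.2) * g (q.1 + q.2) ≤ g (q.1 + q.2) :=
          mul_le_of_le_one_left (by rw [hgxy]; positivity) (hζ01 (q.1 + q.2)).2
        rw [hgxy] at h1 ⊢
        exact h1.trans (rpow_subadd hx0 hy0 hp1)
      · have hz : ζ (q.1 + q.2) = 0 := by
          apply hζ0
          rw [mem_Icc]; push_neg
          intro _
          rw [hbdef] at hxy
          linarith [not_le.1 hxy]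
        rw [hz, zero_mul]
        positivity
    refine mul_nonpos_iff.2 (Or.inr ⟨by linarith, hKnn⟩)
  have hI : (∫ s in (0:ℝ)..t,
      ∫ q in (Ioi (0:ℝ)) ×ˢ (Ioi (0:ℝ)),
        (ζ (q.1 + q.2) * g (q.1 + q.2) - g q.1 - g q.2) * K q.1 q.2
        ∂((f s).prod (f s))) ≤ 0 := by
    have h := intervalIntegral.integral_nonneg (f := fun s =>
        -(∫ q in (Ioi (0:ℝ)) ×ˢ (Ioi (0:ℝ)),
          (ζ (q.1 + q.2) * g (q.1 + q.2) - g q.1 - g q.2) * K q.1 q.2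
          ∂((f s).prod (f s)))) (μ := volume) ht.1
      (fun u hu => neg_nonneg.2 (hD u hu))
    rw [intervalIntegral.integral_neg] at h
    linarith
  set At := ∫ x in Ioi (0:ℝ), g x ∂(f t) with hAt
  set A0 := ∫ x in Ioi (0:ℝ), g x ∂f₀ with hA0
  set C := ∫ x in Ioi (0:ℝ), g x ∂η with hC
  have hCnn : 0 ≤ C := integral_nonneg fun x => gfun_nonneg a b p x ha hab
  have hA0nn : 0 ≤ A0 := integral_nonneg fun x => gfun_nonneg a b p x ha hab
  have hkey : At ≤ A0 + T * C := by
    have htC : t * C ≤ T * C := mul_le_mul_of_nonneg_right ht.2 hCnn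
    nlinarith [heqt, hI]
  haveI := hfin t ht
  rw [moment_eq_integral a b p ha hab (f t) (hsupp t ht).1 (hsupp t ht).2,
    moment_eq_integral a b p ha hab f₀ hf₀supp.1 hf₀supp.2,
    moment_eq_integral a b p ha hab η hηsupp.1 hηsupp.2]
  calc ENNReal.ofReal At ≤ ENNReal.ofReal (A0 + T * C) := ENNReal.ofReal_le_ofReal hkey
    _ = ENNReal.ofReal A0 + ENNReal.ofReal T * ENNReal.ofReal C := by
        rw [ENNReal.ofReal_add hA0nn (by positivity), ENNReal.ofReal_mul hT.le]
end

section
/- Let γ < 1, T > 0, B ≥ 0, and let (f_s)_{s∈[0,T]} be a family of positive Borel measures on (0,∞) such that s ↦ f_s(A) is measurable for every Borel set A, and such that for every R > 0 and every t ∈ [0,T]: ∫_0^t ( (1/R) ∫_{[R/2,R]} R^{(3+γ)/2} f_s(dx) )² ds ≤ B. Then for every t ∈ [0,T] and every x₀ > 0: ∫_0^t ∫_{(0,x₀]} x f_s(dx) ds ≤ ( t^{1/2} · B^{1/2} / (1 − 2^{−(1−γ)/2}) ) · x₀^{(1−γ)/2}. -/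
/-!
Cover `(0, x₀]` by the dyadic intervals `(R/2, R]`, `R = x₀ 2⁻ᵏ`. There `x ≤ R`, and
`R f_s([R/2, R]) = R^((1-γ)/2) · (R⁻¹ ∫_{[R/2,R]} R^((3+γ)/2) f_s(dx))`, so by Cauchy–Schwarz in time
the `k`-th piece contributes at most `R^((1-γ)/2) √B √t`. Since `γ < 1` these contributions form a
convergent geometric series in `k`.
-/

open MeasureTheory Set ENNReal

theorem ENNReal.ofReal_rpow_half (x : ℝ) : ENNReal.ofReal x ^ (1 / 2 : ℝ) = ENNReal.ofReal √x := by
  rcases le_or_gt 0 x with hx | hx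
  · rw [ENNReal.ofReal_rpow_of_nonneg hx (by norm_num), Real.sqrt_eq_rpow]
  · rw [ENNReal.ofReal_of_nonpos hx.le, Real.sqrt_eq_zero'.2 hx.le, ENNReal.ofReal_zero,
      ENNReal.zero_rpow_of_pos (by norm_num)]

theorem lintegral_le_ofReal_sqrt_mul_sqrt {α : Type*} [MeasurableSpace α] {μ : Measure α}
    {g : α → ℝ≥0∞} (hg : AEMeasurable g μ) {B c : ℝ} (hgB : ∫⁻ a, g a ^ 2 ∂μ ≤ ENNReal.ofReal B)
    (hμ : μ univ ≤ ENNReal.ofReal c) :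
    ∫⁻ a, g a ∂μ ≤ ENNReal.ofReal (√B * √c) := by
  have hCS := lintegral_mul_norm_pow_le (hg.pow_const 2) (aemeasurable_const (b := (1 : ℝ≥0∞)))
    (by norm_num : (0:ℝ) ≤ 1 / 2) (by norm_num : (0:ℝ) ≤ 1 / 2) (by norm_num)
  simp only [one_rpow, mul_one, lintegral_const, one_mul] at hCS
  calc ∫⁻ a, g a ∂μ = ∫⁻ a, (g a ^ 2) ^ (1 / 2 : ℝ) ∂μ := by
        congr with a
        rw [← ENNReal.rpow_natCast, ← ENNReal.rpow_mul]; norm_num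
    _ ≤ (∫⁻ a, g a ^ 2 ∂μ) ^ (1 / 2 : ℝ) * μ univ ^ (1 / 2 : ℝ) := hCS
    _ ≤ ENNReal.ofReal B ^ (1 / 2 : ℝ) * ENNReal.ofReal c ^ (1 / 2 : ℝ) := by gcongr
    _ = ENNReal.ofReal (√B * √c) := by
        rw [ENNReal.ofReal_rpow_half, ENNReal.ofReal_rpow_half,
          ENNReal.ofReal_mul (Real.sqrt_nonneg B)]

theorem Ioc_zero_subset_iUnion_dyadic (x₀ : ℝ) :
    Ioc 0 x₀ ⊆ ⋃ k : ℕ, Ioc (x₀ / 2 ^ k / 2) (x₀ / 2 ^ k) := by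
  rintro x ⟨hx, hxx₀⟩
  obtain ⟨k, hk, hk'⟩ := exists_nat_pow_near ((one_le_div hx).2 hxx₀) one_lt_two
  refine mem_iUnion.2 ⟨k, ?_, ?_⟩
  · rw [div_div, ← pow_succ, div_lt_iff₀ (by positivity)]
    rwa [div_lt_iff₀ hx, mul_comm] at hk'
  · rw [le_div_iff₀ (by positivity)]
    rwa [le_div_iff₀ hx, mul_comm] at hk

theorem lintegral_Ioc_zero_le_tsum_dyadic (μ : Measure ℝ) (x₀ : ℝ) :
    ∫⁻ x in Ioc 0 x₀, ENNReal.ofReal x ∂μ ≤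
      ∑' k : ℕ, ENNReal.ofReal (x₀ / 2 ^ k) * μ (Icc (x₀ / 2 ^ k / 2) (x₀ / 2 ^ k)) :=
  calc ∫⁻ x in Ioc 0 x₀, ENNReal.ofReal x ∂μ
      ≤ ∫⁻ x in ⋃ k : ℕ, Ioc (x₀ / 2 ^ k / 2) (x₀ / 2 ^ k), ENNReal.ofReal x ∂μ :=
        lintegral_mono_set (Ioc_zero_subset_iUnion_dyadic x₀)
    _ ≤ ∑' k : ℕ, ∫⁻ x in Ioc (x₀ / 2 ^ k / 2) (x₀ / 2 ^ k), ENNReal.ofReal x ∂μ :=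
        lintegral_iUnion_le _ _
    _ ≤ ∑' k : ℕ, ENNReal.ofReal (x₀ / 2 ^ k) * μ (Icc (x₀ / 2 ^ k / 2) (x₀ / 2 ^ k)) := by
        gcongr with k
        calc ∫⁻ x in Ioc (x₀ / 2 ^ k / 2) (x₀ / 2 ^ k), ENNReal.ofReal x ∂μ
            ≤ ∫⁻ _ in Ioc (x₀ / 2 ^ k / 2) (x₀ / 2 ^ k), ENNReal.ofReal (x₀ / 2 ^ k) ∂μ :=
              setLIntegral_mono' measurableSet_Ioc fun x hx => ENNReal.ofReal_le_ofReal hx.2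
          _ ≤ _ := by
              rw [setLIntegral_const]
              gcongr
              exact Ioc_subset_Icc_self

theorem tsum_ofReal_div_two_pow_rpow {e : ℝ} (he : 0 < e) {x₀ : ℝ} (hx₀ : 0 ≤ x₀) :
    ∑' k : ℕ, ENNReal.ofReal ((x₀ / 2 ^ k) ^ e) = ENNReal.ofReal (x₀ ^ e / (1 - 2 ^ (-e))) := by
  have hr : (0 : ℝ) ≤ 2 ^ (-e) := by positivity
  have hr1 : (2 : ℝ) ^ (-e) < 1 := Real.rpow_lt_one_of_one_lt_of_neg one_lt_two (by linarith)
  have hterm : ∀ k : ℕ, (x₀ / 2 ^ k) ^ e = x₀ ^ e * (2 ^ (-e)) ^ k := fun k => by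
    rw [Real.div_rpow hx₀ (by positivity), div_eq_mul_inv, Real.rpow_neg zero_le_two,
      inv_pow, ← Real.rpow_pow_comm zero_le_two]
  simp_rw [hterm]
  rw [← ENNReal.ofReal_tsum_of_nonneg (fun k => by positivity)
    ((summable_geometric_of_lt_one hr hr1).mul_left _), tsum_mul_left,
    tsum_geometric_of_lt_one hr hr1, div_eq_mul_inv]

theorem ofReal_mul_eq_rpow_mul_inv_mul {R a b : ℝ} (hR : 0 < R) (hab : a + b = 2) (m : ℝ≥0∞) :
    ENNReal.ofReal R * m =
      ENNReal.ofReal (R ^ a) * ((ENNReal.ofReal R)⁻¹ * (ENNReal.ofReal (R ^ b) * m)) := by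
  have hsplit : ENNReal.ofReal (R ^ a) * ENNReal.ofReal (R ^ b) =
      ENNReal.ofReal R * ENNReal.ofReal R := by
    rw [← ENNReal.ofReal_mul (by positivity), ← ENNReal.ofReal_mul hR.le,
      ← Real.rpow_add hR, hab, Real.rpow_two, sq]
  rw [mul_left_comm, ← mul_assoc (ENNReal.ofReal (R ^ a)), hsplit, mul_assoc,
    ← mul_assoc (ENNReal.ofReal R)⁻¹, ENNReal.inv_mul_cancel (by positivity) ENNReal.ofReal_ne_top,
    one_mul]

theorem lintegral_ofReal_mul_measure_Icc_le_of_sq_bound {f : ℝ → Measure ℝ} {R γ B t : ℝ} (hR : 0 < R)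
    (hmeas : Measurable fun s => f s (Icc (R / 2) R))
    (hbound : ∫⁻ s in Icc 0 t,
      ((ENNReal.ofReal R)⁻¹ * ∫⁻ _ in Icc (R / 2) R, ENNReal.ofReal (R ^ ((3 + γ) / 2)) ∂(f s)) ^ 2
        ≤ ENNReal.ofReal B) :
    ∫⁻ s in Icc 0 t, ENNReal.ofReal R * f s (Icc (R / 2) R) ≤
      ENNReal.ofReal (R ^ ((1 - γ) / 2) * (√B * √t)) := by
  simp only [setLIntegral_const] at hbound
  have hexp : (1 - γ) / 2 + (3 + γ) / 2 = 2 := by ring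
  simp_rw [ofReal_mul_eq_rpow_mul_inv_mul hR hexp]
  rw [lintegral_const_mul' _ _ ENNReal.ofReal_ne_top,
    ENNReal.ofReal_mul (by positivity)]
  gcongr
  refine lintegral_le_ofReal_sqrt_mul_sqrt (by fun_prop) hbound ?_
  simp [Real.volume_Icc]

theorem no_mass_near_zero_from_dyadic_bound_general
    (γ T B : ℝ) (hγ : γ < 1)
    (f : ℝ → Measure ℝ)
    (hmeas : ∀ A : Set ℝ, MeasurableSet A → Measurable (fun s => f s A))
    (hbound : ∀ R > (0:ℝ), ∀ t ∈ Icc (0:ℝ) T,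
      (∫⁻ s in Icc (0:ℝ) t,
          ((ENNReal.ofReal R)⁻¹ *
            ∫⁻ x in Icc (R / 2) R,
              ENNReal.ofReal (R ^ ((3 + γ) / 2)) ∂(f s)) ^ 2)
        ≤ ENNReal.ofReal B) :
    ∀ t ∈ Icc (0:ℝ) T, ∀ x₀ > (0:ℝ),
      (∫⁻ s in Icc (0:ℝ) t, ∫⁻ x in Ioc (0:ℝ) x₀, ENNReal.ofReal x ∂(f s))
        ≤ ENNReal.ofReal
            (Real.sqrt t * Real.sqrt B / (1 - 2 ^ (-(1 - γ) / 2))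
              * x₀ ^ ((1 - γ) / 2)) := by
  intro t ht x₀ hx₀
  have he : 0 < (1 - γ) / 2 := by linarith
  have hscale (k : ℕ) : 0 < x₀ / 2 ^ k := by positivity
  calc ∫⁻ s in Icc 0 t, ∫⁻ x in Ioc 0 x₀, ENNReal.ofReal x ∂(f s)
      ≤ ∫⁻ s in Icc 0 t, ∑' k : ℕ,
          ENNReal.ofReal (x₀ / 2 ^ k) * f s (Icc (x₀ / 2 ^ k / 2) (x₀ / 2 ^ k)) :=
        lintegral_mono fun s => lintegral_Ioc_zero_le_tsum_dyadic (f s) x₀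
    _ = ∑' k : ℕ, ∫⁻ s in Icc 0 t,
          ENNReal.ofReal (x₀ / 2 ^ k) * f s (Icc (x₀ / 2 ^ k / 2) (x₀ / 2 ^ k)) :=
        lintegral_tsum fun k => ((hmeas _ measurableSet_Icc).const_mul _).aemeasurable
    _ ≤ ∑' k : ℕ, ENNReal.ofReal ((x₀ / 2 ^ k) ^ ((1 - γ) / 2)) * ENNReal.ofReal (√B * √t) := by
        gcongr with k
        rw [← ENNReal.ofReal_mul (by positivity)]
        exact lintegral_ofReal_mul_measure_Icc_le_of_sq_bound (hscale k) (hmeas _ measurableSet_Icc)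
          (hbound _ (hscale k) t ht)
    _ = ENNReal.ofReal (√t * √B / (1 - 2 ^ (-(1 - γ) / 2)) * x₀ ^ ((1 - γ) / 2)) := by
        rw [ENNReal.tsum_mul_right, tsum_ofReal_div_two_pow_rpow he hx₀.le,
          ← ENNReal.ofReal_mul' (by positivity)]
        ring_nf

/-- Lemma 4.4 of the paper, abstract form: if the squared
time-integrated averaged moments of a measurable family `(f_s)` are bounded by
`B` uniformly in the dyadic scale, then the time-integrated mass near zero
satisfies
`∫_0^t ∫_{(0,x₀]} x f_s(dx) ds ≤ (√t·√B/(1 - 2^{-(1-γ)/2}))·x₀^{(1-γ)/2}`. -/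
theorem no_mass_near_zero_from_dyadic_bound
    (γ T B : ℝ) (hγ : γ < 1) (hT : 0 < T) (hB : 0 ≤ B)
    (f : ℝ → Measure ℝ)
    (hmeas : ∀ A : Set ℝ, MeasurableSet A → Measurable (fun s => f s A))
    (hbound : ∀ R > (0:ℝ), ∀ t ∈ Icc (0:ℝ) T,
      (∫⁻ s in Icc (0:ℝ) t,
          ((ENNReal.ofReal R)⁻¹ *
            ∫⁻ x in Icc (R / 2) R,
              ENNReal.ofReal (R ^ ((3 + γ) / 2)) ∂(f s)) ^ 2)
        ≤ ENNReal.ofReal B) :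
    ∀ t ∈ Icc (0:ℝ) T, ∀ x₀ > (0:ℝ),
      (∫⁻ s in Icc (0:ℝ) t, ∫⁻ x in Ioc (0:ℝ) x₀, ENNReal.ofReal x ∂(f s))
        ≤ ENNReal.ofReal
            (Real.sqrt t * Real.sqrt B / (1 - 2 ^ (-(1 - γ) / 2))
              * x₀ ^ ((1 - γ) / 2)) :=
  no_mass_near_zero_from_dyadic_bound_general γ T B hγ f hmeas hbound
end

section
/- Let K : (0,∞)×(0,∞) → ℝ be a continuous symmetric coagulation kernel satisfying the power-law bounds with constants 0 < c₁ ≤ c₂ and exponents γ, λ, assume |γ+2λ| < 1 and γ < 1, and let (f_t)_{t∈[0,T]} be a weak flux solution with initial datum f₀. Then there exists a constant C_T, depending only on T, c₁, c₂, γ, λ and ∫ x f₀(dx), such that for all t ∈ [0,T] and all x₀ > 0: ∫_0^t ∫_{(0,x₀]} x f_s(dx) ds ≤ C_T · x₀^{(1−γ)/2}. In particular, no mass accumulates at zero. -/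
open MeasureTheory Set ENNReal Filter

/-- The region `Ω_z = {(x,y) : 0 < x ≤ z, y > z - x}`. -/
def OmegaSet (z : ℝ) : Set (ℝ × ℝ) :=
  {p : ℝ × ℝ | 0 < p.1 ∧ p.1 ≤ z ∧ z - p.1 < p.2}

/-- The mass flux `J_μ(z) = ∬_{Ω_z} x K(x,y) μ(dx) μ(dy)`. -/
noncomputable def Jflux (K : ℝ → ℝ → ℝ) (μ : Measure ℝ) (z : ℝ) : ℝ≥0∞ :=
  ∫⁻ p in OmegaSet z, ENNReal.ofReal (p.1 * K p.1 p.2) ∂(μ.prod μ)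

/-- A positive Radon measure on `(0,∞)`, seen as a Borel measure on `ℝ`
giving no mass to `(-∞,0]` and finite mass to compact subsets of `(0,∞)`. -/
def IsRadonOnPos (μ : Measure ℝ) : Prop :=
  μ (Iic 0) = 0 ∧ ∀ k : Set ℝ, IsCompact k → k ⊆ Ioi 0 → μ k < ∞

/-- Weak flux solution of the coagulation equation with constant flux from zero
(Definition 2.3 of the paper): (i) uniformly bounded first moments and weak*
continuity in time of the mass measures `x f_t`; (ii) the flux equation
`∫_{(0,z]} x f_t(dx) - ∫_{(0,z]} x f₀(dx) = -∫_0^t J_{f_s}(z) ds + t` for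
almost every `(t,z) ∈ [0,T] × (0,∞)` (stated in added form since all terms are
nonnegative), with the time-integrated flux finite for all `t ∈ [0,T]` and
almost every `z > 0`. -/
def WeakFluxSolution (K : ℝ → ℝ → ℝ) (T : ℝ) (f₀ : Measure ℝ)
    (f : ℝ → Measure ℝ) : Prop :=
  (∀ t ∈ Icc (0:ℝ) T, IsRadonOnPos (f t)) ∧
  (∃ C : ℝ≥0∞, C < ∞ ∧ ∀ t ∈ Icc (0:ℝ) T,
      (∫⁻ x in Ioi (0:ℝ), ENNReal.ofReal x ∂(f t)) ≤ C) ∧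
  (∀ φ : ℝ → ℝ, Continuous φ → HasCompactSupport φ → tsupport φ ⊆ Ioi 0 →
    ContinuousOn (fun t => ∫ x in Ioi (0:ℝ), x * φ x ∂(f t)) (Icc (0:ℝ) T)) ∧
  (∀ t ∈ Icc (0:ℝ) T, ∀ᵐ z ∂(volume.restrict (Ioi (0:ℝ))),
    (∫⁻ s in Icc (0:ℝ) t, Jflux K (f s) z) < ∞) ∧
  (∀ᵐ p ∂((volume.restrict (Icc (0:ℝ) T)).prod (volume.restrict (Ioi (0:ℝ)))),
    (∫⁻ x in Ioc 0 p.2, ENNReal.ofReal x ∂(f p.1))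
        + ∫⁻ s in Icc (0:ℝ) p.1, Jflux K (f s) p.2
      = (∫⁻ x in Ioc 0 p.2, ENNReal.ofReal x ∂f₀) + ENNReal.ofReal p.1)


/-! The flux identity bounds `∫₀^τ J_{f_s}(z) ds` by `∫ x f₀(dx) + T` for a.e. time `τ` and
a.e. `z > 0`. On the square `(z/2, z]² ⊆ Ω_z` the kernel is bounded below, so
`J_{f_s}(z) ≳ z^{γ-1} (∫_{(z/2,z]} x f_s(dx))²`, and Cauchy–Schwarz in time gives
`∫₀^τ ∫_{(z/2,z]} x f_s(dx) ds ≲ z^{(1-γ)/2}` for every such good `z`. The interval `(0, x₀]` is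
covered by the bands `[(3/4)^{k+1} x₀, (3/4)^k x₀]`, each lying in `(z/2, z]` for some good `z`,
and the resulting series `∑ (3/4)^{k(1-γ)/2}` converges because `γ < 1`. This proves the bound at
a.e. time, hence at every `t ∈ [0, T]` by monotone convergence in `t`. -/

open Topology Metric

noncomputable def mass (μ : Measure ℝ) (s : Set ℝ) : ℝ≥0∞ :=
  ∫⁻ x in s, ENNReal.ofReal x ∂μ

namespace IsRadonOnPos

variable {μ : Measure ℝ}

lemma ae_pos (hμ : IsRadonOnPos μ) : ∀ᵐ x ∂μ, 0 < x :=
  measure_mono_null (fun x (hx : ¬ 0 < x) => not_lt.1 hx) hμ.1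

lemma sigmaFinite (hμ : IsRadonOnPos μ) : SigmaFinite μ := by
  refine Measure.sigmaFinite_of_countable
    (S := insert (Iic 0) (range fun n : ℕ => Icc ((n + 1 : ℝ)⁻¹) (n + 1)))
    ((countable_range _).insert _) ?_ ?_
  · rintro s (rfl | ⟨n, rfl⟩)
    · simp [hμ.1]
    · exact hμ.2 _ isCompact_Icc fun x hx => (inv_pos.2 (by positivity)).trans_le hx.1
  · refine eq_univ_of_forall fun x => ?_
    rcases le_or_gt x 0 with hx | hx
    · exact ⟨_, mem_insert _ _, hx⟩
    · obtain ⟨n, hn⟩ := exists_nat_ge (max x x⁻¹)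
      refine ⟨_, mem_insert_of_mem _ ⟨n, rfl⟩, inv_le_of_inv_le₀ hx ?_, ?_⟩ <;>
        linarith [le_max_left x x⁻¹, le_max_right x x⁻¹]

end IsRadonOnPos

lemma two_rpow_neg_abs_mul_le_rpow {z x : ℝ} (hx : x ∈ Ioc (z / 2) z) (a : ℝ) :
    2 ^ (-|a|) * z ^ a ≤ x ^ a := by
  have hz : 0 < z := by linarith [hx.1, hx.2]
  rcases le_or_gt 0 a with ha | ha
  · calc 2 ^ (-|a|) * z ^ a = (z / 2) ^ a := by
          rw [abs_of_nonneg ha, Real.div_rpow hz.le zero_le_two, Real.rpow_neg zero_le_two,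
            div_eq_inv_mul]
      _ ≤ x ^ a := Real.rpow_le_rpow (by positivity) hx.1.le ha
  · calc 2 ^ (-|a|) * z ^ a ≤ 1 * z ^ a := by
          gcongr
          exact Real.rpow_le_one_of_one_le_of_nonpos one_le_two (by simp)
      _ ≤ x ^ a := by
          rw [one_mul]
          exact Real.rpow_le_rpow_of_nonpos (by linarith [hx.1]) hx.2 ha.le

section Kernel

variable {K : ℝ → ℝ → ℝ} {c₁ c₂ γ lam : ℝ}

lemma mul_rpow_le_mul_kernel (hK : KernelHyp K c₁ c₂ γ lam) {z x y : ℝ}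
    (hx : x ∈ Ioc (z / 2) z) (hy : y ∈ Ioc (z / 2) z) :
    c₁ * (2 ^ (-|γ + lam|) * 2 ^ (-|lam|) / 2) * z ^ (γ + 1) ≤ x * K x y := by
  have hz : 0 < z := by linarith [hx.1, hx.2]
  have hx0 : 0 < x := by linarith [hx.1]
  have hy0 : 0 < y := by linarith [hy.1]
  have hKx : c₁ * (x ^ (γ + lam) * y ^ (-lam)) ≤ K x y :=
    le_trans (mul_le_mul_of_nonneg_left (le_add_of_nonneg_right (by positivity)) hK.1.le)
      (hK.2.2.2.2 x y hx0 hy0).1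
  have hxa := two_rpow_neg_abs_mul_le_rpow hx (γ + lam)
  have hya := two_rpow_neg_abs_mul_le_rpow hy (-lam)
  rw [abs_neg] at hya
  have hzpow : z ^ (γ + 1) = z ^ (γ + lam) * z ^ (-lam) * z := by
    rw [← Real.rpow_add hz, ← Real.rpow_add_one hz.ne']; ring_nf
  calc c₁ * (2 ^ (-|γ + lam|) * 2 ^ (-|lam|) / 2) * z ^ (γ + 1)
      = z / 2 * (c₁ * ((2 ^ (-|γ + lam|) * z ^ (γ + lam)) * (2 ^ (-|lam|) * z ^ (-lam)))) := by
        rw [hzpow]; ring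
    _ ≤ x * (c₁ * (x ^ (γ + lam) * y ^ (-lam))) := by
        have := hK.1
        gcongr
        exact hx.1.le
    _ ≤ x * K x y := by gcongr

lemma exists_pos_mul_sq_le_jflux (hK : KernelHyp K c₁ c₂ γ lam) :
    ∃ c > 0, ∀ (μ : Measure ℝ) [SFinite μ] (z : ℝ), 0 < z →
      ENNReal.ofReal (c * z ^ (γ - 1)) * mass μ (Ioc (z / 2) z) ^ 2 ≤ Jflux K μ z := by
  set c := c₁ * (2 ^ (-|γ + lam|) * 2 ^ (-|lam|) / 2)
  refine ⟨c, by have := hK.1; positivity, fun μ _ z hz => ?_⟩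
  set S := Ioc (z / 2) z
  have hmass : mass μ S ≤ ENNReal.ofReal z * μ S := by
    calc mass μ S ≤ ∫⁻ _ in S, ENNReal.ofReal z ∂μ :=
          setLIntegral_mono' measurableSet_Ioc fun x hx => ENNReal.ofReal_le_ofReal hx.2
      _ = ENNReal.ofReal z * μ S := setLIntegral_const _ _
  have hconst : ENNReal.ofReal (c * z ^ (γ - 1)) * ENNReal.ofReal z ^ 2
      = ENNReal.ofReal (c * z ^ (γ + 1)) := by
    rw [← ENNReal.ofReal_pow hz.le, ← ENNReal.ofReal_mul (by have := hK.1; positivity),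
      mul_assoc, ← Real.rpow_natCast, ← Real.rpow_add hz]
    norm_num [sub_add]
  have hSS : S ×ˢ S ⊆ OmegaSet z := fun p ⟨hx, hy⟩ =>
    ⟨by linarith [hx.1], hx.2, by linarith [hx.1, hy.1]⟩
  calc ENNReal.ofReal (c * z ^ (γ - 1)) * mass μ S ^ 2
      ≤ ENNReal.ofReal (c * z ^ (γ - 1)) * (ENNReal.ofReal z * μ S) ^ 2 := by gcongr
    _ = ∫⁻ _ in S ×ˢ S, ENNReal.ofReal (c * z ^ (γ + 1)) ∂(μ.prod μ) := by
        rw [setLIntegral_const, Measure.prod_prod, ← hconst]; ring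
    _ ≤ ∫⁻ p in S ×ˢ S, ENNReal.ofReal (p.1 * K p.1 p.2) ∂(μ.prod μ) :=
        setLIntegral_mono' (measurableSet_Ioc.prod measurableSet_Ioc) fun p hp =>
          ENNReal.ofReal_le_ofReal (mul_rpow_le_mul_kernel hK hp.1 hp.2)
    _ ≤ Jflux K μ z := lintegral_mono_set hSS

end Kernel

lemma sq_lintegral_le_measure_univ_mul {α : Type*} [MeasurableSpace α] (μ : Measure α)
    (g : α → ℝ≥0∞) : (∫⁻ x, g x ∂μ) ^ 2 ≤ μ univ * ∫⁻ x, g x ^ 2 ∂μ := by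
  obtain ⟨g', hg'm, hg'le, hg'eq⟩ := exists_measurable_le_lintegral_eq μ g
  have hHolder := ENNReal.lintegral_mul_le_Lp_mul_Lq μ Real.HolderConjugate.two_two
    hg'm.aemeasurable (aemeasurable_const (b := (1 : ℝ≥0∞)))
  simp only [Pi.mul_apply, mul_one, ENNReal.one_rpow, lintegral_const, one_mul] at hHolder
  calc (∫⁻ x, g x ∂μ) ^ 2
      ≤ ((∫⁻ x, g' x ^ (2 : ℝ) ∂μ) ^ (1 / 2 : ℝ) * μ univ ^ (1 / 2 : ℝ)) ^ 2 := by
        rw [hg'eq]; gcongr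
    _ = μ univ * ∫⁻ x, g' x ^ 2 ∂μ := by
        rw [mul_pow, ← ENNReal.rpow_natCast, ← ENNReal.rpow_natCast (μ univ ^ _),
          ← ENNReal.rpow_mul, ← ENNReal.rpow_mul]
        norm_num [mul_comm]
    _ ≤ μ univ * ∫⁻ x, g x ^ 2 ∂μ := by gcongr with x; exact hg'le x

lemma tendsto_ofReal_integral_mul_of_tendsto_indicator {μ : Measure ℝ} (hμ : IsRadonOnPos μ)
    {k L : Set ℝ} (hk : MeasurableSet k) (hL : IsCompact L) (hL0 : L ⊆ Ioi 0)
    {φ : ℕ → ℝ → ℝ} (hφc : ∀ n, Continuous (φ n)) (hφ0 : ∀ n x, 0 ≤ φ n x)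
    (hφ1 : ∀ n x, φ n x ≤ 1) (hφL : ∀ n, ∀ x ∉ L, φ n x = 0)
    (hlim : ∀ x, Tendsto (fun n => φ n x) atTop (𝓝 (k.indicator 1 x))) :
    Tendsto (fun n => ENNReal.ofReal (∫ x in Ioi 0, x * φ n x ∂μ)) atTop (𝓝 (mass μ k)) := by
  obtain ⟨M, hM⟩ := hL.bddAbove
  have hbound : ∀ n x, ENNReal.ofReal (x * φ n x) ≤ L.indicator ENNReal.ofReal x := by
    intro n x
    by_cases hx : x ∈ L
    · rw [indicator_of_mem hx]
      exact ENNReal.ofReal_le_ofReal (mul_le_of_le_one_right (hL0 hx).le (hφ1 n x))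
    · simp [hφL n x hx]
  have hLfin : ∫⁻ x, L.indicator ENNReal.ofReal x ∂μ ≠ ∞ := by
    rw [lintegral_indicator hL.measurableSet]
    refine ne_top_of_le_ne_top (b := ∫⁻ _ in L, ENNReal.ofReal M ∂μ) ?_
      (setLIntegral_mono' hL.measurableSet fun x hx => ENNReal.ofReal_le_ofReal (hM hx))
    rw [setLIntegral_const]
    exact ENNReal.mul_ne_top ofReal_ne_top (hμ.2 L hL hL0).ne
  have hint : ∀ n, ENNReal.ofReal (∫ x in Ioi 0, x * φ n x ∂μ)
      = ∫⁻ x, ENNReal.ofReal (x * φ n x) ∂μ := by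
    intro n
    rw [Measure.restrict_eq_self_of_ae_mem (s := Ioi 0) hμ.ae_pos,
      integral_eq_lintegral_of_nonneg_ae
        (hμ.ae_pos.mono fun x hx => mul_nonneg hx.le (hφ0 n x))
        (continuous_id.mul (hφc n)).aestronglyMeasurable,
      ENNReal.ofReal_toReal (ne_top_of_le_ne_top hLfin (lintegral_mono (hbound n)))]
  have hlim' : ∀ x, Tendsto (fun n => ENNReal.ofReal (x * φ n x)) atTop
      (𝓝 (k.indicator ENNReal.ofReal x)) := by
    intro x
    have := ((ENNReal.continuous_ofReal.comp (continuous_const_mul x)).tendsto _).comp (hlim x)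
    by_cases hx : x ∈ k <;> simpa [hx, Function.comp_def] using this
  simp_rw [hint]
  rw [mass, ← lintegral_indicator hk]
  exact tendsto_lintegral_of_dominated_convergence _
    (fun n => ENNReal.measurable_ofReal.comp (measurable_id.mul (hφc n).measurable))
    (fun n => Eventually.of_forall (hbound n)) hLfin (Eventually.of_forall hlim')

lemma aemeasurable_mass_of_continuousOn {f : ℝ → Measure ℝ} {S : Set ℝ} (hS : MeasurableSet S)
    (hrad : ∀ t ∈ S, IsRadonOnPos (f t))
    (hw : ∀ φ : ℝ → ℝ, Continuous φ → HasCompactSupport φ → tsupport φ ⊆ Ioi 0 →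
      ContinuousOn (fun t => ∫ x in Ioi (0:ℝ), x * φ x ∂(f t)) S)
    {k : Set ℝ} (hk : IsCompact k) (hk0 : k ⊆ Ioi 0) :
    AEMeasurable (fun t => mass (f t) k) (volume.restrict S) := by
  obtain ⟨δ, hδ, hkδ⟩ := hk.exists_cthickening_subset_open isOpen_Ioi hk0
  have hδn : ∀ n : ℕ, 0 < δ / (n + 1) := fun n => by positivity
  set φ : ℕ → ℝ → ℝ := fun n x => thickenedIndicator (hδn n) k x
  have hφc : ∀ n, Continuous (φ n) :=
    fun n => NNReal.continuous_coe.comp (thickenedIndicator (hδn n) k).continuous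
  have hφL : ∀ n, ∀ x ∉ cthickening δ k, φ n x = 0 := by
    intro n x hx
    simp only [φ, NNReal.coe_eq_zero]
    refine thickenedIndicator_zero _ _ fun hx' => hx ?_
    refine thickening_subset_cthickening_of_le ?_ k hx'
    exact div_le_self hδ.le (by linarith [n.cast_nonneg (α := ℝ)])
  have hδ0 : Tendsto (fun n : ℕ => δ / (n + 1)) atTop (𝓝 0) :=
    tendsto_const_div_atTop_nhds_zero_nat δ |>.comp (tendsto_add_atTop_nat 1) |>.congr
      fun n => by simp
  have hlim : ∀ x, Tendsto (fun n => φ n x) atTop (𝓝 (k.indicator 1 x)) := by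
    intro x
    have := tendsto_pi_nhds.1 (thickenedIndicator_tendsto_indicator_closure hδn hδ0 k) x
    rw [hk.isClosed.closure_eq] at this
    by_cases hx : x ∈ k <;>
      simpa [φ, hx, Function.comp_def] using (NNReal.continuous_coe.tendsto _).comp this
  refine aemeasurable_of_tendsto_metrizable_ae atTop (fun n => ?_)
    ((ae_restrict_iff' hS).2 (Eventually.of_forall fun t ht =>
      tendsto_ofReal_integral_mul_of_tendsto_indicator (hrad t ht) hk.measurableSet
        hk.cthickening hkδ hφc (fun n x => NNReal.coe_nonneg _)
        (fun n x => thickenedIndicator_le_one _ _ _) hφL hlim))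
  refine (ENNReal.continuous_ofReal.comp_continuousOn (hw _ (hφc n) ?_ ?_)).aemeasurable hS
  · exact HasCompactSupport.intro hk.cthickening (hφL n)
  · exact (closure_minimal (Function.support_subset_iff'.2 (hφL n)) isClosed_cthickening).trans hkδ

lemma exists_mem_Ioo_of_ae_restrict {s : Set ℝ} {P : ℝ → Prop}
    (h : ∀ᵐ z ∂volume.restrict s, P z) {a b : ℝ} (hab : a < b) (hs : Ioo a b ⊆ s) :
    ∃ z ∈ Ioo a b, P z := by
  have : (ae (volume.restrict (Ioo a b))).NeBot := ae_neBot.2 (by simp [hab])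
  obtain ⟨z, hz, hPz⟩ :=
    ((ae_restrict_mem measurableSet_Ioo).and (ae_restrict_of_ae_restrict_of_subset hs h)).exists
  exact ⟨z, hz, hPz⟩

lemma Ioc_zero_subset_iUnion_Icc_pow_mul {ρ x₀ : ℝ} (hρ0 : 0 < ρ) (hρ1 : ρ < 1) (hx₀ : 0 < x₀) :
    Ioc 0 x₀ ⊆ ⋃ k : ℕ, Icc (ρ ^ (k + 1) * x₀) (ρ ^ k * x₀) := by
  intro x hx
  obtain ⟨n, h1, h2⟩ := exists_nat_pow_near_of_lt_one (div_pos hx.1 hx₀)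
    ((div_le_one hx₀).2 hx.2) hρ0 hρ1
  exact mem_iUnion.2 ⟨n, ((lt_div_iff₀ hx₀).1 h1).le, (div_le_iff₀ hx₀).1 h2⟩

lemma setLIntegral_Icc_le_of_ae_restrict {h : ℝ → ℝ≥0∞} {T : ℝ} {C : ℝ≥0∞}
    (hC : ∀ᵐ τ ∂volume.restrict (Icc 0 T), ∫⁻ s in Icc 0 τ, h s ≤ C) {t : ℝ}
    (ht : t ∈ Icc 0 T) : ∫⁻ s in Icc 0 t, h s ≤ C := by
  rcases ht.1.eq_or_lt with rfl | ht0
  · simp [Measure.restrict_eq_zero.2 Real.volume_singleton]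
  obtain ⟨u, -, hu, hut⟩ := exists_seq_strictMono_tendsto' ht0
  have hτ : ∀ n, ∃ τ ∈ Ioo (u n) t, ∫⁻ s in Icc 0 τ, h s ≤ C := fun n =>
    exists_mem_Ioo_of_ae_restrict hC (hu n).2 fun τ hτ =>
      ⟨(hu n).1.le.trans hτ.1.le, hτ.2.le.trans ht.2⟩
  choose τ hτt hτC using hτ
  have hcover : Ico 0 t ⊆ ⋃ n, Icc 0 (τ n) := fun s hs =>
    have ⟨n, hn⟩ := (hut.eventually (lt_mem_nhds hs.2)).exists
    mem_iUnion.2 ⟨n, hs.1, (hn.trans (hτt n).1).le⟩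
  have hdir : Directed (· ⊆ ·) fun n => Icc (0 : ℝ) (τ n) := fun i j =>
    (le_total (τ i) (τ j)).elim (fun hij => ⟨j, Icc_subset_Icc_right hij, le_rfl⟩)
      fun hji => ⟨i, le_rfl, Icc_subset_Icc_right hji⟩
  calc ∫⁻ s in Icc 0 t, h s = ∫⁻ s in Ico 0 t, h s := setLIntegral_congr Ico_ae_eq_Icc.symm
    _ ≤ ∫⁻ s in ⋃ n, Icc 0 (τ n), h s := lintegral_mono_set hcover
    _ = ⨆ n, ∫⁻ s in Icc 0 (τ n), h s := setLIntegral_iUnion_of_directed _ hdir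
    _ ≤ C := iSup_le hτC

section TimeIntegratedMass

variable {K : ℝ → ℝ → ℝ} {f : ℝ → Measure ℝ} {γ c a τ T : ℝ}

lemma setLIntegral_mass_Ioc_half_le (hc : 0 < c) (hτ : 0 ≤ τ) (ha : 0 ≤ a) {z : ℝ} (hz : 0 < z)
    (hJ : ∀ s ∈ Icc 0 τ,
      ENNReal.ofReal (c * z ^ (γ - 1)) * mass (f s) (Ioc (z / 2) z) ^ 2 ≤ Jflux K (f s) z)
    (hflux : ∫⁻ s in Icc 0 τ, Jflux K (f s) z ≤ ENNReal.ofReal a) :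
    ∫⁻ s in Icc 0 τ, mass (f s) (Ioc (z / 2) z)
      ≤ ENNReal.ofReal (√(τ * a / c) * z ^ ((1 - γ) / 2)) := by
  set e := ENNReal.ofReal (c * z ^ (γ - 1))
  have he0 : e ≠ 0 := (ENNReal.ofReal_pos.2 (by positivity)).ne'
  have hsq : e * ∫⁻ s in Icc 0 τ, mass (f s) (Ioc (z / 2) z) ^ 2 ≤ ENNReal.ofReal a := by
    rw [← lintegral_const_mul' _ _ ofReal_ne_top]
    exact (setLIntegral_mono' measurableSet_Icc hJ).trans hflux
  have hreal : τ * (a / (c * z ^ (γ - 1))) = (√(τ * a / c) * z ^ ((1 - γ) / 2)) ^ 2 := by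
    rw [mul_pow, Real.sq_sqrt (by positivity), ← Real.rpow_natCast, ← Real.rpow_mul hz.le,
      show γ - 1 = -((1 - γ) / 2 * ((2 : ℕ) : ℝ)) by push_cast; ring, Real.rpow_neg hz.le]
    field_simp
  refine (ENNReal.pow_le_pow_left_iff two_ne_zero).1 ?_
  calc (∫⁻ s in Icc 0 τ, mass (f s) (Ioc (z / 2) z)) ^ 2
      ≤ ENNReal.ofReal τ * ∫⁻ s in Icc 0 τ, mass (f s) (Ioc (z / 2) z) ^ 2 := by
        simpa [Real.volume_Icc] using sq_lintegral_le_measure_univ_mul (volume.restrict (Icc 0 τ))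
          fun s => mass (f s) (Ioc (z / 2) z)
    _ ≤ ENNReal.ofReal τ * (ENNReal.ofReal a / e) := by
        gcongr
        exact (ENNReal.le_div_iff_mul_le (Or.inl he0) (Or.inl ofReal_ne_top)).2
          (by rwa [mul_comm])
    _ = ENNReal.ofReal (√(τ * a / c) * z ^ ((1 - γ) / 2)) ^ 2 := by
        rw [← ENNReal.ofReal_div_of_pos (by positivity), ← ENNReal.ofReal_mul hτ, hreal,
          ENNReal.ofReal_pow (by positivity)]

lemma setLIntegral_mass_Icc_le (hc : 0 < c) (ha : 0 ≤ a) (hτ : τ ∈ Icc 0 T)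
    (hJ : ∀ z > 0, ∀ s ∈ Icc 0 τ,
      ENNReal.ofReal (c * z ^ (γ - 1)) * mass (f s) (Ioc (z / 2) z) ^ 2 ≤ Jflux K (f s) z)
    (hflux : ∀ᵐ z ∂volume.restrict (Ioi 0), ∫⁻ s in Icc 0 τ, Jflux K (f s) z ≤ ENNReal.ofReal a)
    (hγ : γ ≤ 1) {y : ℝ} (hy : 0 < y) :
    ∫⁻ s in Icc 0 τ, mass (f s) (Icc (3 / 4 * y) y)
      ≤ ENNReal.ofReal (√(T * a / c) * (3 / 2 * y) ^ ((1 - γ) / 2)) := by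
  obtain ⟨z, hz, hzflux⟩ :=
    exists_mem_Ioo_of_ae_restrict hflux (by linarith : y < 3 / 2 * y) fun z hz => hy.trans hz.1
  have hz0 : 0 < z := hy.trans hz.1
  calc ∫⁻ s in Icc 0 τ, mass (f s) (Icc (3 / 4 * y) y)
      ≤ ∫⁻ s in Icc 0 τ, mass (f s) (Ioc (z / 2) z) :=
        lintegral_mono fun s => lintegral_mono_set fun x hx =>
          ⟨by linarith [hx.1, hz.2], hx.2.trans hz.1.le⟩
    _ ≤ ENNReal.ofReal (√(τ * a / c) * z ^ ((1 - γ) / 2)) :=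
        setLIntegral_mass_Ioc_half_le hc hτ.1 ha hz0 (hJ z hz0) hzflux
    _ ≤ ENNReal.ofReal (√(T * a / c) * (3 / 2 * y) ^ ((1 - γ) / 2)) := by
        refine ENNReal.ofReal_le_ofReal (mul_le_mul ?_ ?_ (by positivity) (Real.sqrt_nonneg _))
        · exact Real.sqrt_le_sqrt (by gcongr; exact hτ.2)
        · exact Real.rpow_le_rpow hz0.le hz.2.le (by linarith)

lemma setLIntegral_mass_Ioc_zero_le (hc : 0 < c) (ha : 0 ≤ a) (hτ : τ ∈ Icc 0 T)
    (hJ : ∀ z > 0, ∀ s ∈ Icc 0 τ,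
      ENNReal.ofReal (c * z ^ (γ - 1)) * mass (f s) (Ioc (z / 2) z) ^ 2 ≤ Jflux K (f s) z)
    (hflux : ∀ᵐ z ∂volume.restrict (Ioi 0), ∫⁻ s in Icc 0 τ, Jflux K (f s) z ≤ ENNReal.ofReal a)
    (hγ : γ < 1)
    (hmeas : ∀ k, IsCompact k → k ⊆ Ioi 0 →
      AEMeasurable (fun s => mass (f s) k) (volume.restrict (Icc 0 τ)))
    {x₀ : ℝ} (hx₀ : 0 < x₀) :
    ∫⁻ s in Icc 0 τ, mass (f s) (Ioc 0 x₀)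
      ≤ ENNReal.ofReal (√(T * a / c) * (3 / 2) ^ ((1 - γ) / 2) / (1 - (3 / 4) ^ ((1 - γ) / 2))
          * x₀ ^ ((1 - γ) / 2)) := by
  set p := (1 - γ) / 2 with hp
  set r : ℝ := (3 / 4) ^ p with hr
  have hr0 : 0 ≤ r := by positivity
  have hr1 : r < 1 := Real.rpow_lt_one (by norm_num) (by norm_num) (half_pos (sub_pos.2 hγ))
  set B := √(T * a / c) * (3 / 2) ^ p * x₀ ^ p with hB
  have hband : ∀ k : ℕ,
      ∫⁻ s in Icc 0 τ, mass (f s) (Icc ((3 / 4) ^ (k + 1) * x₀) ((3 / 4) ^ k * x₀))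
        ≤ ENNReal.ofReal (B * r ^ k) := by
    intro k
    have h := setLIntegral_mass_Icc_le hc ha hτ hJ hflux hγ.le (y := (3 / 4) ^ k * x₀)
      (by positivity)
    rw [← hp, show 3 / 4 * ((3 / 4) ^ k * x₀) = (3 / 4 : ℝ) ^ (k + 1) * x₀ by ring] at h
    refine h.trans_eq (congrArg ENNReal.ofReal ?_)
    rw [hB, hr, Real.mul_rpow (by norm_num) (by positivity), Real.mul_rpow (by positivity) hx₀.le,
      ← Real.rpow_pow_comm (by norm_num)]
    ring
  calc ∫⁻ s in Icc 0 τ, mass (f s) (Ioc 0 x₀)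
      ≤ ∫⁻ s in Icc 0 τ, ∑' k : ℕ,
          mass (f s) (Icc ((3 / 4) ^ (k + 1) * x₀) ((3 / 4) ^ k * x₀)) :=
        lintegral_mono fun s => (lintegral_mono_set (Ioc_zero_subset_iUnion_Icc_pow_mul
          (by norm_num) (by norm_num) hx₀)).trans (lintegral_iUnion_le _ _)
    _ = ∑' k : ℕ, ∫⁻ s in Icc 0 τ,
          mass (f s) (Icc ((3 / 4) ^ (k + 1) * x₀) ((3 / 4) ^ k * x₀)) :=
        lintegral_tsum fun k => hmeas _ isCompact_Icc fun x hx =>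
          lt_of_lt_of_le (by positivity) hx.1
    _ ≤ ∑' k : ℕ, ENNReal.ofReal (B * r ^ k) := ENNReal.tsum_le_tsum hband
    _ = ENNReal.ofReal (B * (1 - r)⁻¹) := by
        rw [← ENNReal.ofReal_tsum_of_nonneg (fun k => by positivity)
          ((summable_geometric_of_lt_one hr0 hr1).mul_left B), tsum_mul_left,
          tsum_geometric_of_lt_one hr0 hr1]
    _ = _ := by congr 1; ring

end TimeIntegratedMass

lemma WeakFluxSolution.ae_ae_setLIntegral_jflux_le {K : ℝ → ℝ → ℝ} {T : ℝ} {f₀ : Measure ℝ}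
    {f : ℝ → Measure ℝ} (hf : WeakFluxSolution K T f₀ f) :
    ∀ᵐ τ ∂volume.restrict (Icc 0 T), ∀ᵐ z ∂volume.restrict (Ioi 0),
      ∫⁻ s in Icc 0 τ, Jflux K (f s) z ≤ mass f₀ (Ioi 0) + ENNReal.ofReal T := by
  have hmem : ∀ᵐ q ∂(volume.restrict (Icc (0 : ℝ) T)).prod (volume.restrict (Ioi (0 : ℝ))),
      q ∈ Icc 0 T ×ˢ Ioi 0 := by
    rw [Measure.prod_restrict]
    exact ae_restrict_mem (measurableSet_Icc.prod measurableSet_Ioi)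
  refine Measure.ae_ae_of_ae_prod (p := fun q : ℝ × ℝ =>
    ∫⁻ s in Icc 0 q.1, Jflux K (f s) q.2 ≤ mass f₀ (Ioi 0) + ENNReal.ofReal T) ?_
  filter_upwards [hf.2.2.2.2, hmem] with q hq hqm
  calc ∫⁻ s in Icc 0 q.1, Jflux K (f s) q.2
      ≤ mass (f q.1) (Ioc 0 q.2) + ∫⁻ s in Icc 0 q.1, Jflux K (f s) q.2 := le_add_self
    _ = mass f₀ (Ioc 0 q.2) + ENNReal.ofReal q.1 := hq
    _ ≤ mass f₀ (Ioi 0) + ENNReal.ofReal T :=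
        add_le_add (lintegral_mono_set Ioc_subset_Ioi_self) (ENNReal.ofReal_le_ofReal hqm.1.2)

theorem weak_flux_solution_no_mass_at_zero_general
    (K : ℝ → ℝ → ℝ) (c₁ c₂ γ lam : ℝ)
    (hK : KernelHyp K c₁ c₂ γ lam)
    (hexp2 : γ < 1)
    (f₀ : Measure ℝ)
    (hf₀m : (∫⁻ x in Ioi (0:ℝ), ENNReal.ofReal x ∂f₀) < ∞)
    (T : ℝ)
    (f : ℝ → Measure ℝ) (hf : WeakFluxSolution K T f₀ f) :
    ∃ C_T : ℝ, ∀ t ∈ Icc (0:ℝ) T, ∀ x₀ > (0:ℝ),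
      (∫⁻ s in Icc (0:ℝ) t, ∫⁻ x in Ioc (0:ℝ) x₀, ENNReal.ofReal x ∂(f s))
        ≤ ENNReal.ofReal (C_T * x₀ ^ ((1 - γ) / 2)) := by
  obtain ⟨c, hc, hJ⟩ := exists_pos_mul_sq_le_jflux hK
  set a := (mass f₀ (Ioi 0) + ENNReal.ofReal T).toReal
  have ha : ENNReal.ofReal a = mass f₀ (Ioi 0) + ENNReal.ofReal T :=
    ENNReal.ofReal_toReal (ENNReal.add_ne_top.2 ⟨hf₀m.ne, ofReal_ne_top⟩)
  refine ⟨√(T * a / c) * (3 / 2) ^ ((1 - γ) / 2) / (1 - (3 / 4) ^ ((1 - γ) / 2)),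
    fun t ht x₀ hx₀ =>
      setLIntegral_Icc_le_of_ae_restrict (h := fun s => mass (f s) (Ioc 0 x₀)) ?_ ht⟩
  filter_upwards [hf.ae_ae_setLIntegral_jflux_le, ae_restrict_mem measurableSet_Icc]
    with τ hflux hτ
  refine setLIntegral_mass_Ioc_zero_le hc ENNReal.toReal_nonneg hτ (fun z hz s hs => ?_)
    (by rwa [ha]) hexp2 (fun k hk hk0 => ?_) hx₀
  · have := (hf.1 s ⟨hs.1, hs.2.trans hτ.2⟩).sigmaFinite
    exact hJ (f s) z hz
  · exact (aemeasurable_mass_of_continuousOn measurableSet_Icc hf.1 hf.2.2.1 hk hk0).mono_measure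
      (Measure.restrict_mono (Icc_subset_Icc_right hτ.2) le_rfl)

/-- Proposition 5.3 of the paper: for a weak flux solution
there is a constant `C_T`, depending only on `T`, the kernel constants and
exponents, and the first moment of `f₀`, such that for all `t ∈ [0,T]` and
`x₀ > 0`, `∫_0^t ∫_{(0,x₀]} x f_s(dx) ds ≤ C_T · x₀^{(1-γ)/2}`; in particular
no mass accumulates at zero. -/
theorem weak_flux_solution_no_mass_at_zero
    (K : ℝ → ℝ → ℝ) (c₁ c₂ γ lam : ℝ)
    (hK : KernelHyp K c₁ c₂ γ lam)
    (hexp1 : |γ + 2 * lam| < 1) (hexp2 : γ < 1)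
    (f₀ : Measure ℝ) (hf₀ : IsRadonOnPos f₀)
    (hf₀m : (∫⁻ x in Ioi (0:ℝ), ENNReal.ofReal x ∂f₀) < ∞)
    (T : ℝ) (hT : 0 < T)
    (f : ℝ → Measure ℝ) (hf : WeakFluxSolution K T f₀ f) :
    ∃ C_T : ℝ, ∀ t ∈ Icc (0:ℝ) T, ∀ x₀ > (0:ℝ),
      (∫⁻ s in Icc (0:ℝ) t, ∫⁻ x in Ioc (0:ℝ) x₀, ENNReal.ofReal x ∂(f s))
        ≤ ENNReal.ofReal (C_T * x₀ ^ ((1 - γ) / 2)) :=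
  weak_flux_solution_no_mass_at_zero_general K c₁ c₂ γ lam hK hexp2 f₀ hf₀m T f hf
end

section
/- Fix t ≥ 0 and let μ be a positive Borel measure on (0,∞) such that for all λ > 0: ∫_{(0,∞)} (1 − e^{−λx}) μ(dx) = √λ · tanh(√λ · t). Then the first moment of μ equals t: ∫_{(0,∞)} x μ(dx) = t. -/
/-!
For every real `x` the quotient `(1 - e^{-λx}) / λ` increases to `x` as `λ ↓ 0` (its
`λ`-derivative has the sign of `e^{-y}(1 + y) - 1 ≤ 0`, `y = λx`). By monotone convergence the
first moment of `μ` is therefore the limit of the Bernstein transform divided by `λ`, here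
`tanh (√λ t) / √λ`, which tends to `tanh' 0 · t = t`.
-/

open MeasureTheory Set ENNReal Filter Topology

namespace Real

theorem hasDerivAt_tanh (x : ℝ) : HasDerivAt tanh (1 / cosh x ^ 2) x := by
  have h := (hasDerivAt_sinh x).div (hasDerivAt_cosh x) (cosh_pos x).ne'
  rw [show sinh / cosh = tanh from funext fun y => (tanh_eq_sinh_div_cosh y).symm] at h
  refine h.congr_deriv ?_
  rw [← cosh_sq_sub_sinh_sq x]
  ring

theorem tendsto_div_nhdsNE_zero_of_hasDerivAt {f : ℝ → ℝ} {c : ℝ} (hf : HasDerivAt f c 0)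
    (h0 : f 0 = 0) : Tendsto (fun s => f s / s) (𝓝[≠] 0) (𝓝 c) := by
  simpa [h0, div_eq_inv_mul] using hasDerivAt_iff_tendsto_slope_zero.1 hf

theorem antitoneOn_one_sub_exp_neg_mul_div (x : ℝ) :
    AntitoneOn (fun l => (1 - exp (-(l * x))) / l) (Ioi 0) := by
  have hderiv : ∀ l : ℝ, l ≠ 0 → HasDerivAt (fun l => (1 - exp (-(l * x))) / l)
      ((exp (-(l * x)) * x * l - (1 - exp (-(l * x))) * 1) / l ^ 2) l := by
    intro l hl
    have h := (((hasDerivAt_id l).mul_const x).neg.exp).const_sub 1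
    refine (h.div (hasDerivAt_id l) hl).congr_deriv ?_
    simp
  refine antitoneOn_of_deriv_nonpos (convex_Ioi 0) ?_ ?_ ?_
  · exact fun l hl => (hderiv l (ne_of_gt hl)).continuousAt.continuousWithinAt
  · rw [interior_Ioi]
    exact fun l hl => (hderiv l (ne_of_gt hl)).differentiableAt.differentiableWithinAt
  · rw [interior_Ioi]
    intro l hl
    rw [(hderiv l (ne_of_gt hl)).deriv]
    refine div_nonpos_of_nonpos_of_nonneg ?_ (sq_nonneg l)
    have key : exp (-(l * x)) * (1 + l * x) ≤ 1 := by
      calc exp (-(l * x)) * (1 + l * x) ≤ exp (-(l * x)) * exp (l * x) := by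
            gcongr
            linarith [add_one_le_exp (l * x)]
        _ = 1 := by rw [← exp_add, neg_add_cancel, exp_zero]
    linarith

theorem tendsto_one_sub_exp_neg_mul_div (x : ℝ) :
    Tendsto (fun l => (1 - exp (-(l * x))) / l) (𝓝[≠] 0) (𝓝 x) := by
  refine tendsto_div_nhdsNE_zero_of_hasDerivAt ?_ (by simp)
  simpa using ((hasDerivAt_mul_const x).neg.exp).const_sub 1 (x := (0 : ℝ))

theorem tendsto_sqrt_mul_tanh_div (t : ℝ) :
    Tendsto (fun l => √l * tanh (√l * t) / l) (𝓝[>] 0) (𝓝 t) := by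
  have htanh : Tendsto (fun s => tanh (s * t) / s) (𝓝[≠] 0) (𝓝 t) := by
    refine tendsto_div_nhdsNE_zero_of_hasDerivAt ?_ (by simp)
    exact ((hasDerivAt_tanh _).comp (0 : ℝ) (hasDerivAt_mul_const t)).congr_deriv (by simp)
  have hsqrt : Tendsto sqrt (𝓝[>] 0) (𝓝[≠] 0) :=
    tendsto_nhdsWithin_iff.2
      ⟨sqrt_zero ▸ continuous_sqrt.tendsto 0 |>.mono_left nhdsWithin_le_nhds,
        eventually_nhdsWithin_of_forall fun l hl => (sqrt_pos.2 hl).ne'⟩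
  refine (htanh.comp hsqrt).congr' (eventually_nhdsWithin_of_forall fun l hl => ?_)
  have hs : √l ≠ 0 := (sqrt_pos.2 hl).ne'
  simp only [Function.comp_apply]
  field_simp
  rw [sq_sqrt (le_of_lt hl), mul_div_cancel_left₀ _ (ne_of_gt hl)]

end Real

open Real

theorem tendsto_lintegral_one_sub_exp_neg_mul_div (μ : Measure ℝ) {l : ℕ → ℝ}
    (hl_pos : ∀ n, 0 < l n) (hl_anti : Antitone l) (hl : Tendsto l atTop (𝓝 0)) :
    Tendsto (fun n => ∫⁻ x, ENNReal.ofReal ((1 - exp (-(l n * x))) / l n) ∂μ) atTop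
      (𝓝 (∫⁻ x, ENNReal.ofReal x ∂μ)) := by
  refine lintegral_tendsto_of_tendsto_of_monotone (fun n => by fun_prop)
    (ae_of_all _ fun x m n hmn => ?_) (ae_of_all _ fun x => ?_)
  · exact ofReal_le_ofReal <|
      antitoneOn_one_sub_exp_neg_mul_div x (hl_pos n) (hl_pos m) (hl_anti hmn)
  · have hl' : Tendsto l atTop (𝓝[≠] 0) :=
      tendsto_nhdsWithin_iff.2 ⟨hl, Eventually.of_forall fun n => (hl_pos n).ne'⟩
    exact (ENNReal.continuous_ofReal.tendsto x).comp
      ((tendsto_one_sub_exp_neg_mul_div x).comp hl')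

theorem bernstein_sqrt_tanh_first_moment_general
    (t : ℝ)
    (μ : Measure ℝ)
    (hbern : ∀ l > (0:ℝ),
      (∫⁻ x in Ioi (0:ℝ), ENNReal.ofReal (1 - Real.exp (-(l * x))) ∂μ)
        = ENNReal.ofReal (Real.sqrt l * Real.tanh (Real.sqrt l * t))) :
    (∫⁻ x in Ioi (0:ℝ), ENNReal.ofReal x ∂μ) = ENNReal.ofReal t := by
  set l : ℕ → ℝ := fun n => 1 / ((n : ℝ) + 1)
  have hl_pos : ∀ n, 0 < l n := fun n => Nat.one_div_pos_of_nat
  have hl_anti : Antitone l := fun m n hmn => Nat.one_div_le_one_div hmn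
  have hl : Tendsto l atTop (𝓝 0) := tendsto_one_div_add_atTop_nhds_zero_nat
  have hvalue : ∀ n, ∫⁻ x in Ioi 0, ENNReal.ofReal ((1 - exp (-(l n * x))) / l n) ∂μ
      = ENNReal.ofReal (√(l n) * tanh (√(l n) * t) / l n) := by
    intro n
    have hinv : 0 ≤ (l n)⁻¹ := inv_nonneg.2 (hl_pos n).le
    simp_rw [div_eq_mul_inv, ofReal_mul' hinv]
    rw [lintegral_mul_const' _ _ ofReal_ne_top, hbern _ (hl_pos n)]
  refine tendsto_nhds_unique (tendsto_lintegral_one_sub_exp_neg_mul_div _ hl_pos hl_anti hl) ?_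
  simp_rw [hvalue]
  exact (ENNReal.continuous_ofReal.tendsto t).comp <| (tendsto_sqrt_mul_tanh_div t).comp <|
    tendsto_nhdsWithin_iff.2 ⟨hl, Eventually.of_forall hl_pos⟩

/-- Proposition 6.8 of the paper: if a positive Borel
measure `μ` on `(0,∞)` has Bernstein transform
`∫ (1 - e^{-λx}) μ(dx) = √λ·tanh(√λ·t)` for all `λ > 0`, then its first moment
equals `t`: `∫ x μ(dx) = t`. -/
theorem bernstein_sqrt_tanh_first_moment
    (t : ℝ) (ht : 0 ≤ t)
    (μ : Measure ℝ) (hμpos : μ (Iic 0) = 0)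
    (hbern : ∀ l > (0:ℝ),
      (∫⁻ x in Ioi (0:ℝ), ENNReal.ofReal (1 - Real.exp (-(l * x))) ∂μ)
        = ENNReal.ofReal (Real.sqrt l * Real.tanh (Real.sqrt l * t))) :
    (∫⁻ x in Ioi (0:ℝ), ENNReal.ofReal x ∂μ) = ENNReal.ofReal t :=
  bernstein_sqrt_tanh_first_moment_general t μ hbern
end

section
/- Let f̄ be the measure on (0,∞) with density x ↦ (1/(2√π)) x^{−3/2} with respect to Lebesgue measure, and take the constant kernel K ≡ 2. Then f̄ has constant flux equal to one: for every z > 0, ∫_0^z ∫_{(z−x,∞)} 2x · (1/(2√π)) x^{−3/2} · (1/(2√π)) y^{−3/2} dy dx = 1. -/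
/-!
The inner integral is explicit: `∫_{z-x}^∞ y^{-3/2} dy = 2 (z-x)^{-1/2}`, and since
`x · x^{-3/2} = x^{-1/2}` the flux reduces to `π⁻¹ ∫_0^z (x (z-x))^{-1/2} dx`. This is the
Beta integral `B(1/2, 1/2) = π`, computed from the antiderivative `arcsin ((2x - z) / z)`.
-/

open MeasureTheory Set Real

theorem hasDerivAt_arcsin_affine {a b x : ℝ} (hx : x ∈ Ioo a b) :
    HasDerivAt (fun t => arcsin ((2 * t - a - b) / (b - a))) (√((x - a) * (b - x)))⁻¹ x := by
  obtain ⟨hax, hxb⟩ := hx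
  have hab : 0 < b - a := by linarith
  set u := (2 * x - a - b) / (b - a) with hu
  have hu_sq : 1 - u ^ 2 = (2 / (b - a)) ^ 2 * ((x - a) * (b - x)) := by
    rw [hu]; field_simp; ring
  have hu_lt : u ^ 2 < 1 := by
    have : 0 < (2 / (b - a)) ^ 2 * ((x - a) * (b - x)) := by
      have : 0 < (x - a) * (b - x) := mul_pos (by linarith) (by linarith)
      positivity
    linarith
  have hu₁ : u ≠ -1 := by rintro h; rw [h] at hu_lt; norm_num at hu_lt
  have hu₂ : u ≠ 1 := by rintro h; rw [h] at hu_lt; norm_num at hu_lt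
  have hlin : HasDerivAt (fun t => (2 * t - a - b) / (b - a)) (2 / (b - a)) x := by
    simpa using (((hasDerivAt_id x).const_mul 2).sub_const a |>.sub_const b).div_const (b - a)
  refine ((hasDerivAt_arcsin hu₁ hu₂).comp x hlin).congr_deriv ?_
  rw [hu_sq, sqrt_mul (by positivity), sqrt_sq (by positivity)]
  field_simp

theorem integral_inv_sqrt_mul_sub {a b : ℝ} (hab : a < b) :
    ∫ x in a..b, (√((x - a) * (b - x)))⁻¹ = π := by
  have hcont : ContinuousOn (fun t => arcsin ((2 * t - a - b) / (b - a))) (Icc a b) := by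
    fun_prop
  have hint : IntervalIntegrable (fun x => (√((x - a) * (b - x)))⁻¹) volume a b := by
    rw [intervalIntegrable_iff_integrableOn_Ioc_of_le hab.le]
    exact intervalIntegral.integrableOn_deriv_of_nonneg hcont
      (fun x hx => hasDerivAt_arcsin_affine hx) (fun x _ => by positivity)
  rw [intervalIntegral.integral_eq_sub_of_hasDerivAt_of_le hab.le hcont
    (fun x hx => hasDerivAt_arcsin_affine hx) hint]
  have hba : b - a ≠ 0 := by linarith
  have h₁ : (2 * b - a - b) / (b - a) = 1 := by rw [div_eq_one_iff_eq hba]; ring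
  have h₂ : (2 * a - a - b) / (b - a) = -1 := by rw [div_eq_iff hba]; ring
  simp only [h₁, h₂, arcsin_one, arcsin_neg]
  ring

noncomputable def stationaryDensity (x : ℝ) : ℝ := 1 / (2 * √π) * x ^ (-(3:ℝ) / 2)

theorem rpow_neg_three_halves {x : ℝ} (hx : 0 ≤ x) : x ^ (-(3:ℝ) / 2) = (x * √x)⁻¹ := by
  rw [neg_div, rpow_neg hx, show (3:ℝ) / 2 = 1 + 1 / 2 by norm_num, rpow_add' hx (by norm_num),
    rpow_one, sqrt_eq_rpow]

theorem integral_Ioi_stationaryDensity {c : ℝ} (hc : 0 < c) :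
    ∫ y in Ioi c, stationaryDensity y = (√π * √c)⁻¹ := by
  simp only [stationaryDensity]
  rw [integral_const_mul, integral_Ioi_rpow_of_lt (by norm_num) hc,
    show -(3:ℝ) / 2 + 1 = -(1 / 2) by norm_num, rpow_neg hc.le, ← sqrt_eq_rpow]
  have : 0 < √c := sqrt_pos.2 hc
  field_simp

theorem integral_Ioi_flux_stationaryDensity {x z : ℝ} (hx : 0 < x) (hxz : x < z) :
    ∫ y in Ioi (z - x), 2 * x * stationaryDensity x * stationaryDensity y
      = π⁻¹ * (√(x * (z - x)))⁻¹ := by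
  rw [integral_const_mul, integral_Ioi_stationaryDensity (sub_pos.2 hxz), stationaryDensity,
    rpow_neg_three_halves hx.le, sqrt_mul hx.le]
  have : 0 < √x := sqrt_pos.2 hx
  have : 0 < √(z - x) := sqrt_pos.2 (sub_pos.2 hxz)
  have := sq_sqrt pi_pos.le
  field_simp
  linear_combination (-1) * this

/-- Proposition 6.12 of the paper: the stationary measure
`f̄(dx) = (1/(2√π)) x^{-3/2} dx` has constant flux `1` for the constant kernel
`K ≡ 2`: for every `z > 0`,
`∫_0^z ∫_{(z-x,∞)} 2x·(1/(2√π))x^{-3/2}·(1/(2√π))y^{-3/2} dy dx = 1`. -/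
theorem stationary_constant_flux (z : ℝ) (hz : 0 < z) :
    (∫ x in Ioc (0:ℝ) z,
        ∫ y in Ioi (z - x),
          2 * x * (1 / (2 * Real.sqrt π) * x ^ (-(3:ℝ) / 2))
            * (1 / (2 * Real.sqrt π) * y ^ (-(3:ℝ) / 2)))
      = 1 := by
  change ∫ x in Ioc 0 z, ∫ y in Ioi (z - x), 2 * x * stationaryDensity x * stationaryDensity y = 1
  have hbeta : ∫ x in (0:ℝ)..z, (√(x * (z - x)))⁻¹ = π := by
    simpa only [sub_zero] using integral_inv_sqrt_mul_sub hz
  rw [integral_Ioc_eq_integral_Ioo, setIntegral_congr_fun measurableSet_Ioo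
      fun x hx => integral_Ioi_flux_stationaryDensity hx.1 hx.2, integral_const_mul,
    ← integral_Ioc_eq_integral_Ioo, ← intervalIntegral.integral_of_le hz.le, hbeta,
    inv_mul_cancel₀ pi_ne_zero]
end

section
/- For each t > 0 let f_t be a positive Borel measure on (0,∞) such that ∫_{(0,∞)} (1 − e^{−λx}) f_t(dx) = √λ · tanh(√λ · t) for every λ > 0. Then as t → ∞, f_t converges weakly-* to the stationary constant flux solution: for every continuous compactly supported φ : (0,∞) → ℝ, ∫ φ(x) f_t(dx) → (1/(2√π)) ∫_0^∞ φ(x) x^{−3/2} dx. -/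
/-!
The Bernstein transform `B` of a measure determines the integrals
`∫ (e^{-kx} - e^{-(k+1)x}) dμ = B(k+1) - B(k)`. Substituting `y = e^{-x}`, a test function
`φ` supported in `(0,∞)` is `h(e^{-x}) (1 - e^{-x})` with `h` continuous on `[0,1]`, so by
Weierstrass `∫ φ dμ` is, up to `δ B(1)`, a finite combination of values of `B`. As `t → ∞`,
`√λ tanh(√λ t) → √λ`, which by Tonelli and `Γ(1/2) = √π` is the Bernstein transform of
`(2√π)⁻¹ x^{-3/2} dx`; hence the integrals of `φ` converge.
-/

open MeasureTheory Set ENNReal Real Filter Topology Polynomial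

lemma Real.tanh_eq_one_sub_exp_div (x : ℝ) :
    tanh x = (1 - exp (-(2 * x))) / (1 + exp (-(2 * x))) := by
  rw [tanh_eq, show -(2 * x) = -x + -x by ring, exp_add]
  have h : exp x * exp (-x) = 1 := by rw [← exp_add]; simp
  field_simp
  linear_combination 2 * exp (-x) * h

lemma Real.tanh_nonneg {x : ℝ} (hx : 0 ≤ x) : 0 ≤ tanh x := by
  rw [tanh_eq_sinh_div_cosh]
  exact div_nonneg (sinh_nonneg_iff.2 hx) (cosh_pos x).le

lemma Real.tendsto_tanh_atTop : Tendsto tanh atTop (𝓝 1) := by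
  have hexp : Tendsto (fun x : ℝ => exp (-(2 * x))) atTop (𝓝 0) :=
    tendsto_exp_atBot.comp <| tendsto_neg_atTop_atBot.comp <| tendsto_id.const_mul_atTop two_pos
  rw [funext tanh_eq_one_sub_exp_div]
  have h := ((tendsto_const_nhds (x := (1:ℝ))).sub hexp).div
    ((tendsto_const_nhds (x := (1:ℝ))).add hexp) (by norm_num)
  rwa [sub_zero, add_zero, div_one] at h

lemma tendsto_sqrt_mul_tanh_sqrt_mul {s : ℝ} (hs : 0 ≤ s) :
    Tendsto (fun t => √s * tanh (√s * t)) atTop (𝓝 √s) := by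
  rcases hs.eq_or_lt with rfl | hs
  · simp
  simpa using (tendsto_tanh_atTop.comp (tendsto_id.const_mul_atTop (sqrt_pos.2 hs))).const_mul √s

noncomputable def bernsteinTransform (μ : Measure ℝ) (s : ℝ) : ℝ≥0∞ :=
  ∫⁻ x in Ioi 0, ENNReal.ofReal (1 - exp (-(s * x))) ∂μ

lemma bernsteinTransform_zero (μ : Measure ℝ) : bernsteinTransform μ 0 = 0 := by
  simp [bernsteinTransform]

lemma exp_neg_mul_le_exp_neg_mul {a b x : ℝ} (hab : a ≤ b) (hx : 0 ≤ x) :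
    exp (-(b * x)) ≤ exp (-(a * x)) :=
  exp_le_exp.2 (by nlinarith)

section bernsteinTransform

variable {μ : Measure ℝ} {a b : ℝ}

lemma lintegral_exp_sub_exp_add_bernsteinTransform (ha : 0 ≤ a) (hab : a ≤ b) :
    ∫⁻ x in Ioi 0, ENNReal.ofReal (exp (-(a * x)) - exp (-(b * x))) ∂μ
      + bernsteinTransform μ a = bernsteinTransform μ b := by
  rw [bernsteinTransform, bernsteinTransform, ← lintegral_add_right _ (by fun_prop)]
  refine setLIntegral_congr_fun measurableSet_Ioi fun x hx => ?_
  rw [← ofReal_add (sub_nonneg.2 (exp_neg_mul_le_exp_neg_mul hab (le_of_lt hx)))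
    (sub_nonneg.2 (by simpa using exp_neg_mul_le_exp_neg_mul ha (le_of_lt hx)))]
  ring_nf

lemma integrableOn_exp_sub_exp (ha : 0 ≤ a) (hab : a ≤ b) (hb : bernsteinTransform μ b ≠ ∞) :
    IntegrableOn (fun x => exp (-(a * x)) - exp (-(b * x))) (Ioi 0) μ := by
  refine ⟨by fun_prop, (hasFiniteIntegral_iff_ofReal ?_).2 ?_⟩
  · filter_upwards [ae_restrict_mem measurableSet_Ioi] with x hx
    exact sub_nonneg.2 (exp_neg_mul_le_exp_neg_mul hab (le_of_lt hx))
  · exact (le_self_add.trans (lintegral_exp_sub_exp_add_bernsteinTransform ha hab).le).trans_lt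
      hb.lt_top

lemma setIntegral_exp_sub_exp (ha : 0 ≤ a) (hab : a ≤ b) (hb : bernsteinTransform μ b ≠ ∞) :
    ∫ x in Ioi 0, exp (-(a * x)) - exp (-(b * x)) ∂μ
      = (bernsteinTransform μ b).toReal - (bernsteinTransform μ a).toReal := by
  have hsplit := lintegral_exp_sub_exp_add_bernsteinTransform (μ := μ) ha hab
  have hfin := hsplit ▸ hb
  rw [integral_eq_lintegral_of_nonneg_ae ?_ (by fun_prop), ← hsplit,
    toReal_add (add_ne_top.1 hfin).1 (add_ne_top.1 hfin).2,
    add_sub_cancel_right]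
  filter_upwards [ae_restrict_mem measurableSet_Ioi] with x hx
  exact sub_nonneg.2 (exp_neg_mul_le_exp_neg_mul hab (le_of_lt hx))

lemma integrableOn_one_sub_exp_neg (h1 : bernsteinTransform μ 1 ≠ ∞) :
    IntegrableOn (fun x => 1 - exp (-x)) (Ioi 0) μ := by
  simpa using integrableOn_exp_sub_exp le_rfl zero_le_one h1

lemma setIntegral_one_sub_exp_neg (h1 : bernsteinTransform μ 1 ≠ ∞) :
    ∫ x in Ioi 0, 1 - exp (-x) ∂μ = (bernsteinTransform μ 1).toReal := by
  simpa [bernsteinTransform_zero] using setIntegral_exp_sub_exp le_rfl zero_le_one h1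

lemma eval_exp_neg_mul_one_sub_exp_neg (p : ℝ[X]) (x : ℝ) :
    p.eval (exp (-x)) * (1 - exp (-x))
      = p.sum fun k c => c * (exp (-(k * x)) - exp (-((k + 1) * x))) := by
  rw [eval_eq_sum, Polynomial.sum, Polynomial.sum, Finset.sum_mul]
  refine Finset.sum_congr rfl fun k _ => ?_
  rw [show -((k + 1) * x) = k * (-x) + -x by ring, show -(k * x) = k * (-x) by ring, exp_add,
    exp_nat_mul]
  ring

lemma integrableOn_eval_exp_neg_mul_one_sub_exp_neg (hfin : ∀ n : ℕ, bernsteinTransform μ n ≠ ∞)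
    (p : ℝ[X]) :
    IntegrableOn (fun x => p.eval (exp (-x)) * (1 - exp (-x))) (Ioi 0) μ := by
  simp_rw [eval_exp_neg_mul_one_sub_exp_neg, Polynomial.sum]
  refine integrable_finsetSum _ fun k _ => (integrableOn_exp_sub_exp k.cast_nonneg
    (by linarith) (by exact_mod_cast hfin (k + 1))).const_mul _

lemma setIntegral_eval_exp_neg_mul_one_sub_exp_neg (hfin : ∀ n : ℕ, bernsteinTransform μ n ≠ ∞)
    (p : ℝ[X]) :
    ∫ x in Ioi 0, p.eval (exp (-x)) * (1 - exp (-x)) ∂μ = p.sum fun k c =>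
      c * ((bernsteinTransform μ (k + 1)).toReal - (bernsteinTransform μ k).toReal) := by
  have hk (k : ℕ) : bernsteinTransform μ (k + 1) ≠ ∞ := by exact_mod_cast hfin (k + 1)
  simp_rw [eval_exp_neg_mul_one_sub_exp_neg, Polynomial.sum]
  rw [integral_finsetSum _ fun k _ => ((integrableOn_exp_sub_exp k.cast_nonneg
    (by linarith) (hk k)).const_mul _)]
  refine Finset.sum_congr rfl fun k _ => ?_
  rw [integral_const_mul, setIntegral_exp_sub_exp k.cast_nonneg (by linarith) (hk k)]

lemma abs_setIntegral_sub_sum_le (hfin : ∀ n : ℕ, bernsteinTransform μ n ≠ ∞) {φ : ℝ → ℝ}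
    (hφ : Continuous φ) {p : ℝ[X]} {δ : ℝ}
    (happrox : ∀ x > 0, |φ x - p.eval (exp (-x)) * (1 - exp (-x))| ≤ δ * (1 - exp (-x))) :
    |∫ x in Ioi 0, φ x ∂μ - p.sum fun k c =>
        c * ((bernsteinTransform μ (k + 1)).toReal - (bernsteinTransform μ k).toReal)|
      ≤ δ * (bernsteinTransform μ 1).toReal := by
  have h1 : bernsteinTransform μ 1 ≠ ∞ := by exact_mod_cast hfin 1
  have hq := integrableOn_eval_exp_neg_mul_one_sub_exp_neg hfin p
  have hbound : ∀ᵐ x ∂μ.restrict (Ioi 0),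
      ‖φ x - p.eval (exp (-x)) * (1 - exp (-x))‖ ≤ δ * (1 - exp (-x)) := by
    filter_upwards [ae_restrict_mem measurableSet_Ioi] with x hx using happrox x hx
  have hdiff : IntegrableOn (fun x => φ x - p.eval (exp (-x)) * (1 - exp (-x))) (Ioi 0) μ :=
    ((integrableOn_one_sub_exp_neg h1).const_mul δ).mono' (by fun_prop) hbound
  have hφi : IntegrableOn φ (Ioi 0) μ :=
    (hdiff.add hq).congr (ae_of_all _ fun x => sub_add_cancel (φ x) _)
  calc _ = ‖∫ x in Ioi 0, φ x - p.eval (exp (-x)) * (1 - exp (-x)) ∂μ‖ := by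
        rw [integral_sub hφi hq, setIntegral_eval_exp_neg_mul_one_sub_exp_neg hfin, norm_eq_abs]
    _ ≤ ∫ x in Ioi 0, δ * (1 - exp (-x)) ∂μ := norm_integral_le_of_norm_le
        ((integrableOn_one_sub_exp_neg h1).const_mul δ) hbound
    _ = δ * (bernsteinTransform μ 1).toReal := by
        rw [integral_const_mul, setIntegral_one_sub_exp_neg h1]

end bernsteinTransform

lemma continuous_comp_neg_log {g : ℝ → ℝ} (hg : Continuous g) (hcs : HasCompactSupport g)
    (h0 : g 0 = 0) : Continuous fun y => g (-Real.log y) := by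
  -- at `y = 0` the value is `g (-log 0) = g 0` (`log 0 = 0`), while `-log y → ∞` nearby
  refine continuous_iff_continuousAt.2 fun y => ?_
  rcases eq_or_ne y 0 with rfl | hy
  · rw [continuousAt_iff_punctured_nhds, Real.log_zero, neg_zero, h0]
    exact (hcs.is_zero_at_infty.mono_left atTop_le_cocompact).comp
      (tendsto_neg_atBot_atTop.comp tendsto_log_nhdsNE_zero)
  · exact hg.continuousAt.comp (continuousAt_log hy).neg

lemma exists_polynomial_approx_exp_neg {φ : ℝ → ℝ} (hφ : Continuous φ)
    (hcs : HasCompactSupport φ) (hsupp : tsupport φ ⊆ Ioi 0) {δ : ℝ} (hδ : 0 < δ) :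
    ∃ p : ℝ[X], ∀ x > 0, |φ x - p.eval (exp (-x)) * (1 - exp (-x))| ≤ δ * (1 - exp (-x)) := by
  have hpos {x : ℝ} (hx : 0 < x) : 0 < 1 - exp (-x) := by
    simpa using Real.exp_lt_one_iff.2 (neg_lt_zero.2 hx)
  set g : ℝ → ℝ := fun x => φ x * (1 - exp (-x))⁻¹
  have hg : Continuous g := ContinuousOn.continuous_of_tsupport_subset
    (hφ.continuousOn.mul ((by fun_prop : Continuous fun x => 1 - exp (-x)).continuousOn.inv₀
      fun x hx => (hpos hx).ne')) isOpen_Ioi (tsupport_mul_subset_left.trans hsupp)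
  -- `g 0 = 0` since `(1 - exp 0)⁻¹ = 0⁻¹ = 0`
  obtain ⟨p, hp⟩ := exists_polynomial_near_of_continuousOn 0 1 _
    (continuous_comp_neg_log hg hcs.mul_right (by simp [g])).continuousOn δ hδ
  refine ⟨p, fun x hx => ?_⟩
  have hpx := hp (exp (-x)) ⟨(exp_pos _).le, exp_le_one_iff.2 (neg_nonpos.2 hx.le)⟩
  rw [Real.log_exp, neg_neg] at hpx
  have hφx : φ x = g x * (1 - exp (-x)) := by simp [g, (hpos hx).ne']
  rw [hφx, ← sub_mul, abs_mul, abs_of_pos (hpos hx), abs_sub_comm]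
  exact mul_le_mul_of_nonneg_right hpx.le (hpos hx).le

theorem tendsto_setIntegral_of_tendsto_bernsteinTransform {ι : Type*} {L : Filter ι}
    {μs : ι → Measure ℝ} {μ : Measure ℝ}
    (hfin_eventually : ∀ᶠ i in L, ∀ n : ℕ, bernsteinTransform (μs i) n ≠ ∞)
    (hfin : ∀ n : ℕ, bernsteinTransform μ n ≠ ∞)
    (hconv : ∀ n : ℕ, Tendsto (fun i => (bernsteinTransform (μs i) n).toReal) L
      (𝓝 (bernsteinTransform μ n).toReal))
    {φ : ℝ → ℝ} (hφ : Continuous φ) (hcs : HasCompactSupport φ) (hsupp : tsupport φ ⊆ Ioi 0) :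
    Tendsto (fun i => ∫ x in Ioi 0, φ x ∂μs i) L (𝓝 (∫ x in Ioi 0, φ x ∂μ)) := by
  rw [Metric.tendsto_nhds]
  intro ε hε
  set b := (bernsteinTransform μ 1).toReal
  have hb : 0 ≤ b := toReal_nonneg
  obtain ⟨p, hp⟩ := exists_polynomial_approx_exp_neg hφ hcs hsupp
    (by positivity : 0 < ε / (4 * (b + 1)))
  have hδ : ε / (4 * (b + 1)) * (b + 1) = ε / 4 := by field_simp
  set S : Measure ℝ → ℝ := fun ν => p.sum fun k c =>
    c * ((bernsteinTransform ν (k + 1)).toReal - (bernsteinTransform ν k).toReal)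
  have hconv_succ (k : ℕ) : Tendsto (fun i => (bernsteinTransform (μs i) (k + 1)).toReal) L
      (𝓝 (bernsteinTransform μ (k + 1)).toReal) := by exact_mod_cast hconv (k + 1)
  have hS : Tendsto (fun i => S (μs i)) L (𝓝 (S μ)) :=
    tendsto_finsetSum _ fun k _ => ((hconv_succ k).sub (hconv k)).const_mul _
  have hlim := abs_setIntegral_sub_sum_le hfin hφ hp
  filter_upwards [hfin_eventually, (by simpa using hconv 1 : Tendsto _ L (𝓝 b)).eventually
    (gt_mem_nhds (lt_add_one b)), Metric.tendsto_nhds.1 hS (ε / 4) (by positivity)]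
    with i hfin_i hb_i hS_i
  have hi := abs_setIntegral_sub_sum_le hfin_i hφ hp
  have hbi : ε / (4 * (b + 1)) * (bernsteinTransform (μs i) 1).toReal ≤ ε / 4 :=
    hδ ▸ mul_le_mul_of_nonneg_left hb_i.le (by positivity)
  have hb' : ε / (4 * (b + 1)) * b ≤ ε / 4 :=
    hδ ▸ mul_le_mul_of_nonneg_left (lt_add_one b).le (by positivity)
  rw [dist_eq] at hS_i ⊢
  rw [abs_le] at hi hlim
  rw [abs_lt] at hS_i ⊢
  constructor <;> linarith

lemma integral_exp_neg_mul_const {x : ℝ} (hx : x ≠ 0) (s : ℝ) :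
    ∫ u in (0:ℝ)..s, exp (-(u * x)) = (1 - exp (-(s * x))) / x := by
  have h := intervalIntegral.integral_comp_mul_right exp (neg_ne_zero.2 hx) (a := 0) (b := s)
  simp only [mul_neg, zero_mul, neg_zero, integral_exp, exp_zero, smul_eq_mul] at h
  rw [h, inv_neg, div_eq_inv_mul]
  ring

lemma ofReal_one_sub_exp_neg_mul_mul_rpow_eq_lintegral {s x : ℝ} (hs : 0 ≤ s) (hx : 0 < x) :
    ENNReal.ofReal ((1 - exp (-(s * x))) * x ^ (-(3:ℝ) / 2))
      = ∫⁻ u in Ioc 0 s, ENNReal.ofReal (x ^ (-(1:ℝ) / 2) * exp (-(u * x))) := by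
  have hrpow : x ^ (-(3:ℝ) / 2) = x ^ (-(1:ℝ) / 2) / x := by
    rw [← rpow_sub_one hx.ne']
    norm_num
  rw [← ofReal_integral_eq_lintegral_ofReal, integral_const_mul,
    ← intervalIntegral.integral_of_le hs, integral_exp_neg_mul_const hx.ne', hrpow]
  · congr 1
    ring
  · exact (by fun_prop : Continuous fun u => x ^ (-(1:ℝ) / 2) * exp (-(u * x))).integrableOn_Ioc
  · exact ae_of_all _ fun u => by positivity

lemma lintegral_rpow_neg_half_mul_exp_neg_mul {u : ℝ} (hu : 0 < u) :
    ∫⁻ x in Ioi 0, ENNReal.ofReal (x ^ (-(1:ℝ) / 2) * exp (-(u * x)))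
      = ENNReal.ofReal (√π * u ^ (-(1:ℝ) / 2)) := by
  have hint : IntegrableOn (fun x : ℝ => x ^ (-(1:ℝ) / 2) * exp (-(u * x))) (Ioi 0) := by
    simpa using integrableOn_rpow_mul_exp_neg_mul_rpow (s := -(1:ℝ) / 2) (p := 1) (by norm_num)
      one_pos hu
  rw [← ofReal_integral_eq_lintegral_ofReal hint, show -(1:ℝ) / 2 = 1 / 2 - 1 by norm_num,
    integral_rpow_mul_exp_neg_mul_Ioi one_half_pos hu, Gamma_one_half_eq]
  · congr 1
    rw [mul_comm, one_div, Real.inv_rpow hu.le, ← Real.rpow_neg hu.le]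
    norm_num
  · filter_upwards [ae_restrict_mem measurableSet_Ioi] with x hx
    have := hx.out
    positivity

lemma lintegral_Ioc_sqrt_pi_mul_rpow_neg_half {s : ℝ} (hs : 0 ≤ s) :
    ∫⁻ u in Ioc 0 s, ENNReal.ofReal (√π * u ^ (-(1:ℝ) / 2)) = ENNReal.ofReal (2 * √π * √s) := by
  have hint : IntervalIntegrable (fun u : ℝ => u ^ (-(1:ℝ) / 2)) volume 0 s :=
    intervalIntegral.intervalIntegrable_rpow' (by norm_num)
  rw [← ofReal_integral_eq_lintegral_ofReal, integral_const_mul,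
    ← intervalIntegral.integral_of_le hs, integral_rpow (Or.inl (by norm_num)), sqrt_eq_rpow s]
  · congr 1
    norm_num
    ring
  · exact (hint.const_mul √π).1
  · filter_upwards [ae_restrict_mem measurableSet_Ioc] with u hu
    have := hu.1
    positivity

lemma lintegral_one_sub_exp_neg_mul_mul_rpow {s : ℝ} (hs : 0 ≤ s) :
    ∫⁻ x in Ioi 0, ENNReal.ofReal ((1 - exp (-(s * x))) * x ^ (-(3:ℝ) / 2))
      = ENNReal.ofReal (2 * √π * √s) := by
  calc _ = ∫⁻ x in Ioi 0, ∫⁻ u in Ioc 0 s,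
        ENNReal.ofReal (x ^ (-(1:ℝ) / 2) * exp (-(u * x))) :=
        setLIntegral_congr_fun measurableSet_Ioi fun x hx =>
          ofReal_one_sub_exp_neg_mul_mul_rpow_eq_lintegral hs hx
    _ = ∫⁻ u in Ioc 0 s, ∫⁻ x in Ioi 0,
        ENNReal.ofReal (x ^ (-(1:ℝ) / 2) * exp (-(u * x))) :=
        lintegral_lintegral_swap (by fun_prop)
    _ = ∫⁻ u in Ioc 0 s, ENNReal.ofReal (√π * u ^ (-(1:ℝ) / 2)) :=
        setLIntegral_congr_fun measurableSet_Ioc fun u hu =>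
          lintegral_rpow_neg_half_mul_exp_neg_mul hu.1
    _ = ENNReal.ofReal (2 * √π * √s) := lintegral_Ioc_sqrt_pi_mul_rpow_neg_half hs

noncomputable def constantFluxSolution : Measure ℝ :=
  (volume.restrict (Ioi 0)).withDensity fun x => ENNReal.ofReal (1 / (2 * √π) * x ^ (-(3:ℝ) / 2))

lemma bernsteinTransform_constantFluxSolution {s : ℝ} (hs : 0 ≤ s) :
    bernsteinTransform constantFluxSolution s = ENNReal.ofReal √s := by
  rw [bernsteinTransform, constantFluxSolution,
    setLIntegral_withDensity_eq_setLIntegral_mul _ (by fun_prop) (by fun_prop) measurableSet_Ioi,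
    Measure.restrict_restrict measurableSet_Ioi, inter_self]
  calc _ = ∫⁻ x in Ioi 0, ENNReal.ofReal (1 / (2 * √π))
        * ENNReal.ofReal ((1 - exp (-(s * x))) * x ^ (-(3:ℝ) / 2)) := by
        refine setLIntegral_congr_fun measurableSet_Ioi fun x hx => ?_
        have := hx.out
        rw [Pi.mul_apply, ← ofReal_mul (by positivity), ← ofReal_mul (by positivity)]
        ring_nf
    _ = ENNReal.ofReal √s := by
        rw [lintegral_const_mul _ (by fun_prop), lintegral_one_sub_exp_neg_mul_mul_rpow hs,
          ← ofReal_mul (by positivity)]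
        field_simp

lemma setIntegral_constantFluxSolution (φ : ℝ → ℝ) :
    ∫ x in Ioi 0, φ x ∂constantFluxSolution
      = 1 / (2 * √π) * ∫ x in Ioi 0, φ x * x ^ (-(3:ℝ) / 2) := by
  rw [constantFluxSolution, setIntegral_withDensity_eq_setIntegral_toReal_smul (by fun_prop)
    (ae_of_all _ fun _ => ofReal_lt_top) _ measurableSet_Ioi,
    Measure.restrict_restrict measurableSet_Ioi, inter_self, ← integral_const_mul]
  refine setIntegral_congr_fun measurableSet_Ioi fun x hx => ?_
  have := hx.out
  rw [toReal_ofReal (by positivity), smul_eq_mul]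
  ring

/-- Proposition 6.13 of the paper: if each `f_t` (`t > 0`)
is a positive Borel measure on `(0,∞)` with Bernstein transform
`√λ·tanh(√λ·t)`, then as `t → ∞` the measures `f_t` converge weakly-* to the
stationary constant flux solution `(1/(2√π)) x^{-3/2} dx`: for every continuous
compactly supported `φ : (0,∞) → ℝ`,
`∫ φ(x) f_t(dx) → (1/(2√π)) ∫_0^∞ φ(x) x^{-3/2} dx`. -/
theorem convergence_to_stationary_constant_kernel
    (f : ℝ → Measure ℝ)
    (hbern : ∀ t > (0:ℝ), ∀ l > (0:ℝ),
      (∫⁻ x in Ioi (0:ℝ), ENNReal.ofReal (1 - Real.exp (-(l * x))) ∂(f t))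
        = ENNReal.ofReal (Real.sqrt l * Real.tanh (Real.sqrt l * t))) :
    ∀ φ : ℝ → ℝ, Continuous φ → HasCompactSupport φ → tsupport φ ⊆ Ioi 0 →
      Filter.Tendsto (fun t => ∫ x in Ioi (0:ℝ), φ x ∂(f t)) Filter.atTop
        (nhds (1 / (2 * Real.sqrt π)
          * ∫ x in Ioi (0:ℝ), φ x * x ^ (-(3:ℝ) / 2))) := by
  intro φ hφ hcs hsupp
  have hf (t : ℝ) (ht : 0 < t) (n : ℕ) :
      bernsteinTransform (f t) n = ENNReal.ofReal (√n * tanh (√n * t)) := by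
    rcases (n.cast_nonneg : (0:ℝ) ≤ n).eq_or_lt with h | h
    · simp [← h, bernsteinTransform_zero]
    · exact hbern t ht n h
  rw [← setIntegral_constantFluxSolution]
  refine tendsto_setIntegral_of_tendsto_bernsteinTransform ?_
    (fun n => by simp [bernsteinTransform_constantFluxSolution]) (fun n => ?_) hφ hcs hsupp
  · filter_upwards [eventually_gt_atTop 0] with t ht n
    exact hf t ht n ▸ ofReal_ne_top
  · rw [bernsteinTransform_constantFluxSolution n.cast_nonneg, toReal_ofReal (sqrt_nonneg _)]
    refine (tendsto_sqrt_mul_tanh_sqrt_mul n.cast_nonneg).congr' ?_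
    filter_upwards [eventually_gt_atTop 0] with t ht
    rw [hf t ht, toReal_ofReal (mul_nonneg (sqrt_nonneg _) (tanh_nonneg (by positivity)))]
end
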